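/- arXiv:2205.10108 — 8 statements merged into one kernel-verified Lean document; each statement's English description precedes it below -/
import Mathlib

section
/- For any 3×3 real symmetric positive semidefinite matrix of the form M = [[x,0,y],[0,0,0],[y,0,z]] (with x,z ≥ 0 and xz ≥ y²), the trace of the matrix square root of M equals √(x + z + 2√(xz − y²)). -/
open Matrix Kronecker
open scoped ComplexOrder

/-- The positive semidefinite square root of a positive semidefinite matrix
(removed from Mathlib; restored here with its December 2024 definition). -/
noncomputable def Matrix.PosSemidef.sqrt {n 𝕜 : Type*} [Fintype n] [RCLike 𝕜] [DecidableEq n]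
    {A : Matrix n n 𝕜} (hA : A.PosSemidef) : Matrix n n 𝕜 :=
  hA.1.eigenvectorUnitary.1 * diagonal ((↑) ∘ (Real.sqrt ∘ hA.1.eigenvalues)) *
  (star hA.1.eigenvectorUnitary : Matrix n n 𝕜)

theorem Matrix.PosSemidef.eq_sqrt_of_sq_eq {n : Type*} [Fintype n] [DecidableEq n]
    {A B : Matrix n n ℝ} (hB : B.PosSemidef) (hA : A.PosSemidef) (hAB : B ^ 2 = A) :
    B = hA.sqrt := by
  have h1 : hA.sqrt = cfc Real.sqrt A := by
    rw [hA.1.cfc_eq]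
    unfold IsHermitian.cfc Matrix.PosSemidef.sqrt
    simp [Unitary.conjStarAlgAut_apply]
  have hBs : IsSelfAdjoint B := hB.1
  rw [h1, ← hAB, ← cfc_comp_pow Real.sqrt 2 B (ha := hBs)]
  rw [cfc_congr (g := id), cfc_id ℝ B hBs]
  intro x hx
  rw [hB.1.spectrum_real_eq_range_eigenvalues] at hx
  obtain ⟨i, rfl⟩ := hx
  simp [Real.sqrt_sq (hB.eigenvalues_nonneg i)]

theorem stmt0 (x y z : ℝ) (hx : 0 ≤ x) (hz : 0 ≤ z) (hxz : y ^ 2 ≤ x * z)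
    (hM : (!![x, 0, y; 0, 0, 0; y, 0, z] : Matrix (Fin 3) (Fin 3) ℝ).PosSemidef) :
    hM.sqrt.trace = Real.sqrt (x + z + 2 * Real.sqrt (x * z - y ^ 2)) := by
  set d := Real.sqrt (x * z - y ^ 2) with hd
  have hd0 : 0 ≤ d := Real.sqrt_nonneg _
  have hd2 : d ^ 2 = x * z - y ^ 2 := Real.sq_sqrt (by linarith)
  set s := Real.sqrt (x + z + 2 * d) with hs
  have hs0 : 0 ≤ s := Real.sqrt_nonneg _
  have hs2 : s ^ 2 = x + z + 2 * d := Real.sq_sqrt (by linarith)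
  by_cases hc : s = 0
  · -- degenerate case: everything is zero
    have h0 : x + z + 2 * d = 0 := by
      have := hs2; rw [hc] at this; linarith [this]
    have hx0 : x = 0 := by linarith
    have hz0 : z = 0 := by linarith
    have hy0 : y = 0 := by nlinarith [sq_nonneg y]
    have hzero : (!![x, 0, y; 0, 0, 0; y, 0, z] : Matrix (Fin 3) (Fin 3) ℝ) = 0 := by
      subst hx0 hz0 hy0
      ext i j
      fin_cases i <;> fin_cases j <;> simp [Matrix.vecHead, Matrix.vecTail]
    have h02 : (0 : Matrix (Fin 3) (Fin 3) ℝ) ^ 2 = !![x, 0, y; 0, 0, 0; y, 0, z] := by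
      rw [hzero, pow_two, mul_zero]
    have := (Matrix.PosSemidef.zero (n := Fin 3) (R := ℝ)).eq_sqrt_of_sq_eq hM h02
    rw [← this]
    simp [hc.symm, hs]
  · have hspos : 0 < s := lt_of_le_of_ne hs0 (Ne.symm hc)
    have hdet : 0 ≤ (x + d) * (z + d) - y ^ 2 := by
      nlinarith [mul_nonneg hd0 (add_nonneg hx hz)]
    have hSpsd : (s⁻¹ • !![x + d, 0, y; 0, 0, 0; y, 0, z + d]
        : Matrix (Fin 3) (Fin 3) ℝ).PosSemidef := by
      rw [Matrix.posSemidef_iff_dotProduct_mulVec]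
      constructor
      · ext i j
        fin_cases i <;> fin_cases j <;> simp [Matrix.vecHead, Matrix.vecTail]
      · intro v
        have key : 0 ≤ (x + d) * v 0 ^ 2 + 2 * y * v 0 * v 2 + (z + d) * v 2 ^ 2 := by
          rcases eq_or_lt_of_le (by linarith : (0:ℝ) ≤ x + d) with h | h
          · have hy0 : y = 0 := by nlinarith [sq_nonneg y]
            rw [← h, hy0]
            nlinarith [sq_nonneg (v 2)]
          · nlinarith [sq_nonneg ((x + d) * v 0 + y * v 2),
              mul_nonneg hdet (sq_nonneg (v 2)), h]
        have hval : star v ⬝ᵥ ((s⁻¹ • !![x + d, 0, y; 0, 0, 0; y, 0, z + d]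
              : Matrix (Fin 3) (Fin 3) ℝ) *ᵥ v) =
            s⁻¹ * ((x + d) * v 0 ^ 2 + 2 * y * v 0 * v 2 + (z + d) * v 2 ^ 2) := by
          simp [dotProduct, mulVec, Fin.sum_univ_three, Matrix.vecHead, Matrix.vecTail]
          ring
        rw [hval]
        positivity
    have hsq : (s⁻¹ • !![x + d, 0, y; 0, 0, 0; y, 0, z + d]
        : Matrix (Fin 3) (Fin 3) ℝ) ^ 2 = !![x, 0, y; 0, 0, 0; y, 0, z] := by
      ext i j
      fin_cases i <;> fin_cases j <;>
        simp [pow_two, Matrix.mul_apply, Fin.sum_univ_three,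
          Matrix.vecHead, Matrix.vecTail]
      all_goals field_simp
      · linear_combination hd2 - x * hs2
      · linear_combination -y * hs2
      · linear_combination -y * hs2
      · linear_combination hd2 - z * hs2
    have heq := hSpsd.eq_sqrt_of_sq_eq hM hsq
    rw [← heq]
    have : ((s⁻¹ • !![x + d, 0, y; 0, 0, 0; y, 0, z + d]
        : Matrix (Fin 3) (Fin 3) ℝ)).trace = s⁻¹ * (x + z + 2 * d) := by
      simp [Matrix.trace, Fin.sum_univ_three, Matrix.diag, Matrix.vecHead, Matrix.vecTail]
      ring
    rw [this, ← hs2]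
    field_simp [pow_two]
end

section
/- The fully entangled fraction of a product state ρ_A ⊗ ρ_B of two qubits is f(ρ_A ⊗ ρ_B) = 1/4 + (1/4)·Δρ_A·Δρ_B, where Δρ_X is the difference between the maximal and minimal eigenvalues of ρ_X. -/
open Matrix Kronecker
open scoped ComplexOrder

noncomputable def psiPlus : (Fin 2 × Fin 2) → ℂ :=
  fun p => if p.1 = p.2 then ((1 / Real.sqrt 2 : ℝ) : ℂ) else 0

/-- The fully entangled fraction of a two-qubit state. -/
noncomputable def fef (ρ : Matrix (Fin 2 × Fin 2) (Fin 2 × Fin 2) ℂ) : ℝ :=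
  sSup {x : ℝ | ∃ U ∈ Matrix.unitaryGroup (Fin 2) ℂ,
    x = (star psiPlus ⬝ᵥ
      ((((1 : Matrix (Fin 2) (Fin 2) ℂ) ⊗ₖ Uᴴ) * ρ * ((1 : Matrix (Fin 2) (Fin 2) ℂ) ⊗ₖ U))
        *ᵥ psiPlus)).re}

/-- Spectral gap: maximal minus minimal eigenvalue of a 2×2 Hermitian matrix. -/
noncomputable def gap (A : Matrix (Fin 2) (Fin 2) ℂ) (hA : A.IsHermitian) : ℝ :=
  max (hA.eigenvalues 0) (hA.eigenvalues 1) - min (hA.eigenvalues 0) (hA.eigenvalues 1)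

set_option maxHeartbeats 1000000

lemma key_inner (M N : Matrix (Fin 2) (Fin 2) ℂ) :
    star psiPlus ⬝ᵥ ((M ⊗ₖ N) *ᵥ psiPlus) = (M * Nᵀ).trace / 2 := by
  have h2 : ((Real.sqrt 2 : ℝ) : ℂ)⁻¹ ^ 2 = 1/2 := by
    rw [← Complex.ofReal_inv, ← Complex.ofReal_pow]
    norm_num [Real.sq_sqrt]
  simp only [dotProduct, mulVec, Pi.star_apply, psiPlus, Matrix.trace, Matrix.diag,
    Matrix.mul_apply, transpose_apply, kroneckerMap_apply, Fintype.sum_prod_type,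
    Fin.sum_univ_two]
  norm_num
  ring_nf
  rw [h2]
  ring

lemma ct_t (A : Matrix (Fin 2) (Fin 2) ℂ) : (Aᵀ)ᴴ = (Aᴴ)ᵀ := by
  ext i j; simp

-- diagonal entries of a psd matrix are nonneg (in the complex order)
lemma diag_nonneg {n : Type*} [Fintype n] [DecidableEq n] {M : Matrix n n ℂ}
    (hM : M.PosSemidef) (i : n) : 0 ≤ M i i := by
  have h := hM.dotProduct_mulVec_nonneg (Pi.single i 1)
  simpa [mulVec_single, dotProduct, Pi.single_apply, apply_ite] using h

lemma trace_eq_sum_eig {A : Matrix (Fin 2) (Fin 2) ℂ} (hA : A.IsHermitian) :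
    A.trace = ((hA.eigenvalues 0 : ℝ) : ℂ) + ((hA.eigenvalues 1 : ℝ) : ℂ) := by
  conv_lhs => rw [show A = (hA.eigenvectorUnitary : Matrix (Fin 2) (Fin 2) ℂ) * diagonal (RCLike.ofReal ∘ hA.eigenvalues) * star (hA.eigenvectorUnitary : Matrix (Fin 2) (Fin 2) ℂ) from hA.spectral_theorem]
  rw [Matrix.trace_mul_cycle,
    Matrix.mem_unitaryGroup_iff'.mp hA.eigenvectorUnitary.2, one_mul,
    Matrix.trace_diagonal, Fin.sum_univ_two]
  simp

lemma sub_psd {B : Matrix (Fin 2) (Fin 2) ℂ} (hB : B.PosSemidef) {r : ℝ}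
    (h0 : hB.1.eigenvalues 0 ≤ r) (h1 : hB.1.eigenvalues 1 ≤ r) :
    ((r : ℂ) • 1 - B).PosSemidef := by
  obtain ⟨V, hV, hBeq⟩ : ∃ V : Matrix (Fin 2) (Fin 2) ℂ, V * star V = 1 ∧
      B = V * diagonal (RCLike.ofReal ∘ hB.1.eigenvalues) * star V :=
    ⟨_, Matrix.mem_unitaryGroup_iff.mp hB.1.eigenvectorUnitary.2, hB.1.spectral_theorem⟩
  have key : (r:ℂ) • 1 - B
      = V * diagonal (fun i => ((r - hB.1.eigenvalues i : ℝ) : ℂ)) * star V := by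
    conv_lhs => rw [hBeq]
    have hd : (diagonal (fun i => ((r - hB.1.eigenvalues i : ℝ) : ℂ)))
        = (r:ℂ) • (1 : Matrix (Fin 2) (Fin 2) ℂ)
          - diagonal (RCLike.ofReal ∘ hB.1.eigenvalues) := by
      ext i j
      by_cases h : i = j <;>
        simp [h, Matrix.one_apply, Matrix.diagonal_apply, Function.comp] <;>
        push_cast <;> ring
    rw [hd, mul_sub, sub_mul, mul_smul_comm, mul_one, smul_mul_assoc, hV]
  rw [key, Matrix.star_eq_conjTranspose]
  exact (Matrix.posSemidef_diagonal_iff.mpr fun i => by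
    rw [Complex.zero_le_real]; fin_cases i <;> simpa).mul_mul_conjTranspose_same V

lemma psd_sub {B : Matrix (Fin 2) (Fin 2) ℂ} (hB : B.PosSemidef) {r : ℝ}
    (h0 : r ≤ hB.1.eigenvalues 0) (h1 : r ≤ hB.1.eigenvalues 1) :
    (B - (r : ℂ) • 1).PosSemidef := by
  obtain ⟨V, hV, hBeq⟩ : ∃ V : Matrix (Fin 2) (Fin 2) ℂ, V * star V = 1 ∧
      B = V * diagonal (RCLike.ofReal ∘ hB.1.eigenvalues) * star V :=
    ⟨_, Matrix.mem_unitaryGroup_iff.mp hB.1.eigenvectorUnitary.2, hB.1.spectral_theorem⟩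
  have key : B - (r:ℂ) • 1
      = V * diagonal (fun i => ((hB.1.eigenvalues i - r : ℝ) : ℂ)) * star V := by
    conv_lhs => rw [hBeq]
    have hd : (diagonal (fun i => ((hB.1.eigenvalues i - r : ℝ) : ℂ)))
        = diagonal (RCLike.ofReal ∘ hB.1.eigenvalues)
          - (r:ℂ) • (1 : Matrix (Fin 2) (Fin 2) ℂ) := by
      ext i j
      by_cases h : i = j <;>
        simp [h, Matrix.one_apply, Matrix.diagonal_apply, Function.comp] <;>
        push_cast <;> ring
    rw [hd, mul_sub, sub_mul, mul_smul_comm, mul_one, smul_mul_assoc, hV]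
  rw [key, Matrix.star_eq_conjTranspose]
  exact (Matrix.posSemidef_diagonal_iff.mpr fun i => by
    rw [Complex.zero_le_real]; fin_cases i <;> simpa).mul_mul_conjTranspose_same V

lemma re_div_two (z : ℂ) : (z / 2).re = z.re / 2 := by
  rw [div_eq_mul_inv, show ((2:ℂ))⁻¹ = ((2⁻¹:ℝ):ℂ) by norm_num, Complex.mul_re]
  simp
  ring

lemma trace_ub {P R : Matrix (Fin 2) (Fin 2) ℂ} (hP : P.PosSemidef) (hR : R.PosSemidef)
    (htR : R.trace = 1) {qmin qmax : ℝ} (hq : qmin + qmax = 1)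
    (hup : (((qmax:ℝ):ℂ) • 1 - R).PosSemidef) (hlo : (R - ((qmin:ℝ):ℂ) • 1).PosSemidef) :
    ((P * R).trace).re ≤
      max (hP.1.eigenvalues 0) (hP.1.eigenvalues 1) * qmax
        + min (hP.1.eigenvalues 0) (hP.1.eigenvalues 1) * qmin := by
  obtain ⟨V, hV1, hV2, hPeq⟩ : ∃ V : Matrix (Fin 2) (Fin 2) ℂ, V * Vᴴ = 1 ∧ Vᴴ * V = 1 ∧
      P = V * diagonal (RCLike.ofReal ∘ hP.1.eigenvalues) * Vᴴ := by
    refine ⟨(hP.1.eigenvectorUnitary : Matrix (Fin 2) (Fin 2) ℂ), ?_, ?_, ?_⟩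
    · rw [← Matrix.star_eq_conjTranspose]
      exact Matrix.mem_unitaryGroup_iff.mp hP.1.eigenvectorUnitary.2
    · rw [← Matrix.star_eq_conjTranspose]
      exact Matrix.mem_unitaryGroup_iff'.mp hP.1.eigenvectorUnitary.2
    · rw [← Matrix.star_eq_conjTranspose]
      exact hP.1.spectral_theorem
  have ha0 : 0 ≤ hP.1.eigenvalues 0 := hP.eigenvalues_nonneg 0
  have ha1 : 0 ≤ hP.1.eigenvalues 1 := hP.eigenvalues_nonneg 1
  set a : Fin 2 → ℝ := hP.1.eigenvalues with ha
  set S : Matrix (Fin 2) (Fin 2) ℂ := Vᴴ * R * V with hSdef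
  have htr : (P * R).trace = ((a 0 : ℝ):ℂ) * S 0 0 + ((a 1:ℝ):ℂ) * S 1 1 := by
    conv_lhs => rw [hPeq]
    simp [Matrix.trace, Matrix.diag, Matrix.mul_apply, Fin.sum_univ_two, hSdef,
      Matrix.diagonal, Function.comp]
    ring
  have hSpsd : S.PosSemidef := by rw [hSdef]; exact hR.conjTranspose_mul_mul_same V
  have hupS : (((qmax:ℝ):ℂ) • 1 - S).PosSemidef := by
    have heq : ((qmax:ℝ):ℂ) • (1 : Matrix (Fin 2) (Fin 2) ℂ) - S
        = Vᴴ * (((qmax:ℝ):ℂ) • 1 - R) * V := by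
      rw [hSdef, mul_sub, sub_mul, mul_smul_comm, mul_one, smul_mul_assoc, hV2]
    rw [heq]; exact hup.conjTranspose_mul_mul_same V
  have hloS : (S - ((qmin:ℝ):ℂ) • 1).PosSemidef := by
    have heq : S - ((qmin:ℝ):ℂ) • (1 : Matrix (Fin 2) (Fin 2) ℂ)
        = Vᴴ * (R - ((qmin:ℝ):ℂ) • 1) * V := by
      rw [hSdef, mul_sub, sub_mul, mul_smul_comm, mul_one, smul_mul_assoc, hV2]
    rw [heq]; exact hlo.conjTranspose_mul_mul_same V
  have hup0 : (S 0 0).re ≤ qmax := by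
    have h := diag_nonneg hupS 0
    rw [Complex.nonneg_iff] at h
    simpa using h.1
  have hup1 : (S 1 1).re ≤ qmax := by
    have h := diag_nonneg hupS 1
    rw [Complex.nonneg_iff] at h
    simpa using h.1
  have hlo0 : qmin ≤ (S 0 0).re := by
    have h := diag_nonneg hloS 0
    rw [Complex.nonneg_iff] at h
    simpa using h.1
  have hlo1 : qmin ≤ (S 1 1).re := by
    have h := diag_nonneg hloS 1
    rw [Complex.nonneg_iff] at h
    simpa using h.1
  have htrS : S 0 0 + S 1 1 = 1 := by
    have h : S.trace = 1 := by
      rw [hSdef, Matrix.trace_mul_cycle, hV1, one_mul, htR]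
    simpa [Matrix.trace, Matrix.diag, Fin.sum_univ_two] using h
  have hsum : (S 0 0).re + (S 1 1).re = 1 := by
    have := congrArg Complex.re htrS
    simpa using this
  have hre : ((P*R).trace).re = a 0 * (S 0 0).re + a 1 * (S 1 1).re := by
    rw [htr]; simp [Complex.add_re, Complex.mul_re]
  rw [hre]
  rcases le_total (a 0) (a 1) with h | h
  · rw [max_eq_right h, min_eq_left h]
    calc a 0 * (S 0 0).re + a 1 * (S 1 1).re
        = a 0 * ((S 0 0).re + (S 1 1).re) + (a 1 - a 0) * (S 1 1).re := by ring
      _ ≤ a 0 * 1 + (a 1 - a 0) * qmax := by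
          rw [hsum]
          exact add_le_add le_rfl (mul_le_mul_of_nonneg_left hup1 (by linarith))
      _ = a 1 * qmax + a 0 * (1 - qmax) := by ring
      _ = a 1 * qmax + a 0 * qmin := by rw [show (1:ℝ) - qmax = qmin by linarith]
  · rw [max_eq_left h, min_eq_right h]
    calc a 0 * (S 0 0).re + a 1 * (S 1 1).re
        = a 1 * ((S 0 0).re + (S 1 1).re) + (a 0 - a 1) * (S 0 0).re := by ring
      _ ≤ a 1 * 1 + (a 0 - a 1) * qmax := by
          rw [hsum]
          exact add_le_add le_rfl (mul_le_mul_of_nonneg_left hup0 (by linarith))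
      _ = a 0 * qmax + a 1 * (1 - qmax) := by ring
      _ = a 0 * qmax + a 1 * qmin := by rw [show (1:ℝ) - qmax = qmin by linarith]

lemma exists_opt {ρA ρB : Matrix (Fin 2) (Fin 2) ℂ} (hA : ρA.PosSemidef) (hB : ρB.PosSemidef) :
    ∃ U ∈ Matrix.unitaryGroup (Fin 2) ℂ,
      ((ρA * ((Uᴴ * ρB * U)ᵀ)).trace).re
        = max (hA.1.eigenvalues 0) (hA.1.eigenvalues 1) * max (hB.1.eigenvalues 0) (hB.1.eigenvalues 1)
          + min (hA.1.eigenvalues 0) (hA.1.eigenvalues 1) * min (hB.1.eigenvalues 0) (hB.1.eigenvalues 1) := by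
  set a : Fin 2 → ℝ := hA.1.eigenvalues with ha
  set b : Fin 2 → ℝ := hB.1.eigenvalues with hb
  obtain ⟨V, hVU, hAeq⟩ : ∃ V : Matrix (Fin 2) (Fin 2) ℂ, V ∈ Matrix.unitaryGroup (Fin 2) ℂ ∧
      ρA = V * diagonal (RCLike.ofReal ∘ a) * Vᴴ :=
    ⟨_, hA.1.eigenvectorUnitary.2, by
      rw [← Matrix.star_eq_conjTranspose]; exact hA.1.spectral_theorem⟩
  obtain ⟨W, hWU, hBeq⟩ : ∃ W : Matrix (Fin 2) (Fin 2) ℂ, W ∈ Matrix.unitaryGroup (Fin 2) ℂ ∧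
      ρB = W * diagonal (RCLike.ofReal ∘ b) * Wᴴ :=
    ⟨_, hB.1.eigenvectorUnitary.2, by
      rw [← Matrix.star_eq_conjTranspose]; exact hB.1.spectral_theorem⟩
  have hV2 : Vᴴ * V = 1 := by
    rw [← Matrix.star_eq_conjTranspose]; exact Matrix.mem_unitaryGroup_iff'.mp hVU
  have hW2 : Wᴴ * W = 1 := by
    rw [← Matrix.star_eq_conjTranspose]; exact Matrix.mem_unitaryGroup_iff'.mp hWU
  obtain ⟨P, s, hPU, hPd, hsum⟩ : ∃ (P : Matrix (Fin 2) (Fin 2) ℂ) (s : Fin 2 → ℝ),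
      P ∈ Matrix.unitaryGroup (Fin 2) ℂ ∧
      Pᴴ * diagonal (RCLike.ofReal ∘ b) * P = diagonal (fun i => ((s i : ℝ) : ℂ)) ∧
      a 0 * s 0 + a 1 * s 1
        = max (a 0) (a 1) * max (b 0) (b 1) + min (a 0) (a 1) * min (b 0) (b 1) := by
    rcases le_total (a 0) (a 1) with h | h <;> rcases le_total (b 0) (b 1) with h' | h'
    · refine ⟨1, b, one_mem _, by simp [Function.comp], ?_⟩
      rw [max_eq_right h, max_eq_right h', min_eq_left h, min_eq_left h']; ring
    · refine ⟨!![0,1;1,0], ![b 1, b 0], ?_, ?_, ?_⟩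
      · rw [Matrix.mem_unitaryGroup_iff]
        ext i j
        fin_cases i <;> fin_cases j <;>
          simp [Matrix.mul_apply, Fin.sum_univ_two, Matrix.star_eq_conjTranspose,
            Matrix.conjTranspose_apply, Matrix.one_apply]
      · ext i j
        fin_cases i <;> fin_cases j <;>
          simp [Matrix.mul_apply, Fin.sum_univ_two, Matrix.diagonal,
            Matrix.conjTranspose_apply, Function.comp]
      · rw [max_eq_right h, max_eq_left h', min_eq_left h, min_eq_right h']
        simp
        try ring
    · refine ⟨!![0,1;1,0], ![b 1, b 0], ?_, ?_, ?_⟩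
      · rw [Matrix.mem_unitaryGroup_iff]
        ext i j
        fin_cases i <;> fin_cases j <;>
          simp [Matrix.mul_apply, Fin.sum_univ_two, Matrix.star_eq_conjTranspose,
            Matrix.conjTranspose_apply, Matrix.one_apply]
      · ext i j
        fin_cases i <;> fin_cases j <;>
          simp [Matrix.mul_apply, Fin.sum_univ_two, Matrix.diagonal,
            Matrix.conjTranspose_apply, Function.comp]
      · rw [max_eq_left h, max_eq_right h', min_eq_right h, min_eq_left h']
        simp
        try ring
    · refine ⟨1, b, one_mem _, by simp [Function.comp], ?_⟩
      rw [max_eq_left h, max_eq_left h', min_eq_right h, min_eq_right h']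
  have hVtU : Vᵀ ∈ Matrix.unitaryGroup (Fin 2) ℂ := by
    rw [Matrix.mem_unitaryGroup_iff, Matrix.star_eq_conjTranspose, ct_t, ← transpose_mul, hV2,
      transpose_one]
  refine ⟨W * P * Vᵀ, mul_mem (mul_mem hWU hPU) hVtU, ?_⟩
  have cancelW : ∀ X : Matrix (Fin 2) (Fin 2) ℂ, Wᴴ * (W * X) = X := fun X => by
    rw [← Matrix.mul_assoc, hW2, one_mul]
  have cancelV : ∀ X : Matrix (Fin 2) (Fin 2) ℂ, Vᴴ * (V * X) = X := fun X => by
    rw [← Matrix.mul_assoc, hV2, one_mul]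
  have hPd' : ∀ X : Matrix (Fin 2) (Fin 2) ℂ,
      Pᴴ * (diagonal (RCLike.ofReal ∘ b) * (P * X)) = diagonal (fun i => ((s i : ℝ):ℂ)) * X :=
    fun X => by simp only [← Matrix.mul_assoc]; rw [hPd]
  have hQ : (W * P * Vᵀ)ᴴ * ρB * (W * P * Vᵀ)
      = (Vᵀ)ᴴ * (diagonal (fun i => ((s i : ℝ):ℂ)) * Vᵀ) := by
    conv_lhs => rw [hBeq]
    simp only [conjTranspose_mul, Matrix.mul_assoc]
    rw [cancelW, cancelW, hPd']
  rw [hQ]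
  have hQt : ((Vᵀ)ᴴ * (diagonal (fun i => ((s i : ℝ):ℂ)) * Vᵀ))ᵀ
      = V * (diagonal (fun i => ((s i : ℝ):ℂ)) * Vᴴ) := by
    rw [transpose_mul, transpose_mul, transpose_transpose, diagonal_transpose, ct_t,
      transpose_transpose]
    simp only [Matrix.mul_assoc]
  rw [hQt]
  conv_lhs => rw [hAeq]
  simp only [Matrix.mul_assoc]
  rw [cancelV, Matrix.trace_mul_comm]
  simp only [Matrix.mul_assoc]
  rw [hV2, mul_one, diagonal_mul_diagonal, Matrix.trace_diagonal, Fin.sum_univ_two]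
  have : ((((a 0 :ℝ):ℂ)) * ((s 0:ℝ):ℂ) + (((a 1:ℝ):ℂ)) * ((s 1:ℝ):ℂ)).re
      = a 0 * s 0 + a 1 * s 1 := by
    push_cast
    simp
  simpa [Function.comp] using this.trans hsum

theorem stmt6 (ρA ρB : Matrix (Fin 2) (Fin 2) ℂ)
    (hA : ρA.PosSemidef) (hB : ρB.PosSemidef)
    (htA : ρA.trace = 1) (htB : ρB.trace = 1) :
    fef (ρA ⊗ₖ ρB) = 1 / 4 + 1 / 4 * gap ρA hA.1 * gap ρB hB.1 := by
  have ha_sum : hA.1.eigenvalues 0 + hA.1.eigenvalues 1 = 1 := by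
    have h := trace_eq_sum_eig hA.1
    rw [htA] at h
    exact_mod_cast h.symm
  have hb_sum : hB.1.eigenvalues 0 + hB.1.eigenvalues 1 = 1 := by
    have h := trace_eq_sum_eig hB.1
    rw [htB] at h
    exact_mod_cast h.symm
  set aM := max (hA.1.eigenvalues 0) (hA.1.eigenvalues 1) with haM
  set am := min (hA.1.eigenvalues 0) (hA.1.eigenvalues 1) with ham
  set bM := max (hB.1.eigenvalues 0) (hB.1.eigenvalues 1) with hbM
  set bm := min (hB.1.eigenvalues 0) (hB.1.eigenvalues 1) with hbm
  have h1 : aM + am = 1 := by rw [haM, ham, max_add_min]; exact ha_sum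
  have h2 : bM + bm = 1 := by rw [hbM, hbm, max_add_min]; exact hb_sum
  have hset : ∀ U : Matrix (Fin 2) (Fin 2) ℂ,
      (star psiPlus ⬝ᵥ
        ((((1 : Matrix (Fin 2) (Fin 2) ℂ) ⊗ₖ Uᴴ) * (ρA ⊗ₖ ρB) *
          ((1 : Matrix (Fin 2) (Fin 2) ℂ) ⊗ₖ U)) *ᵥ psiPlus)).re
      = ((ρA * ((Uᴴ * ρB * U)ᵀ)).trace).re / 2 := by
    intro U
    rw [show ((1 : Matrix (Fin 2) (Fin 2) ℂ) ⊗ₖ Uᴴ) * (ρA ⊗ₖ ρB) *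
          ((1 : Matrix (Fin 2) (Fin 2) ℂ) ⊗ₖ U) = ρA ⊗ₖ (Uᴴ * ρB * U) by
      rw [← Matrix.mul_kronecker_mul, ← Matrix.mul_kronecker_mul, one_mul, mul_one]]
    rw [key_inner, re_div_two]
  have hgreat : IsGreatest {x : ℝ | ∃ U ∈ Matrix.unitaryGroup (Fin 2) ℂ,
      x = (star psiPlus ⬝ᵥ
        ((((1 : Matrix (Fin 2) (Fin 2) ℂ) ⊗ₖ Uᴴ) * (ρA ⊗ₖ ρB) *
          ((1 : Matrix (Fin 2) (Fin 2) ℂ) ⊗ₖ U)) *ᵥ psiPlus)).re}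
      ((aM * bM + am * bm)/2) := by
    constructor
    · obtain ⟨U, hU, hval⟩ := exists_opt hA hB
      exact ⟨U, hU, by rw [hset U, hval]⟩
    · rintro x ⟨U, hU, rfl⟩
      rw [hset U]
      have hU1 : U * Uᴴ = 1 := by
        rw [← Matrix.star_eq_conjTranspose]; exact Matrix.mem_unitaryGroup_iff.mp hU
      have hU2 : Uᴴ * U = 1 := by
        rw [← Matrix.star_eq_conjTranspose]; exact Matrix.mem_unitaryGroup_iff'.mp hU
      have hRpsd : ((Uᴴ * ρB * U)ᵀ).PosSemidef := (hB.conjTranspose_mul_mul_same U).transpose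
      have htR : ((Uᴴ * ρB * U)ᵀ).trace = 1 := by
        rw [Matrix.trace_transpose, Matrix.trace_mul_cycle, hU1, one_mul, htB]
      have hq : bm + bM = 1 := by linarith
      have hub : (((bM:ℝ):ℂ) • 1 - (Uᴴ * ρB * U)ᵀ).PosSemidef := by
        have hpsd1 : (((bM:ℝ):ℂ) • 1 - ρB).PosSemidef :=
          sub_psd hB (le_max_left _ _) (le_max_right _ _)
        have hpsd2 := hpsd1.conjTranspose_mul_mul_same U
        have heq : Uᴴ * (((bM:ℝ):ℂ) • 1 - ρB) * U = ((bM:ℝ):ℂ) • 1 - Uᴴ * ρB * U := by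
          rw [mul_sub, sub_mul, mul_smul_comm, mul_one, smul_mul_assoc, hU2]
        rw [heq] at hpsd2
        have hpsd3 := hpsd2.transpose
        rwa [transpose_sub, transpose_smul, transpose_one] at hpsd3
      have hlo : ((Uᴴ * ρB * U)ᵀ - ((bm:ℝ):ℂ) • 1).PosSemidef := by
        have hpsd1 : (ρB - ((bm:ℝ):ℂ) • 1).PosSemidef :=
          psd_sub hB (min_le_left _ _) (min_le_right _ _)
        have hpsd2 := hpsd1.conjTranspose_mul_mul_same U
        have heq : Uᴴ * (ρB - ((bm:ℝ):ℂ) • 1) * U = Uᴴ * ρB * U - ((bm:ℝ):ℂ) • 1 := by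
          rw [mul_sub, sub_mul, mul_smul_comm, mul_one, smul_mul_assoc, hU2]
        rw [heq] at hpsd2
        have hpsd3 := hpsd2.transpose
        rwa [transpose_sub, transpose_smul, transpose_one] at hpsd3
      have := trace_ub hA hRpsd htR hq hub hlo
      rw [← haM, ← ham] at this
      linarith
  rw [show fef (ρA ⊗ₖ ρB) = sSup {x : ℝ | ∃ U ∈ Matrix.unitaryGroup (Fin 2) ℂ,
      x = (star psiPlus ⬝ᵥ
        ((((1 : Matrix (Fin 2) (Fin 2) ℂ) ⊗ₖ Uᴴ) * (ρA ⊗ₖ ρB) *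
          ((1 : Matrix (Fin 2) (Fin 2) ℂ) ⊗ₖ U)) *ᵥ psiPlus)).re} from rfl,
    hgreat.csSup_eq]
  show (aM * bM + am * bm)/2 = 1/4 + 1/4 * (aM - am) * (bM - bm)
  linear_combination ((1/4 : ℝ) + (1/4)*(bM + bm - 1)) * h1 + (1/4 : ℝ) * h2
end

section
/- For two rank-one qubit projectors |a⟩⟨a| and |b⟩⟨b| and any qubit density operator ρ, (1/2)⟨a|ρ|a⟩ + (1/2)⟨b|ρ|b⟩ ≤ (1/2)(1 + |⟨a|b⟩|) (the Landau–Pollak uncertainty relation for a qubit). -/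
open Matrix Kronecker
open scoped ComplexOrder

-- Cauchy-Schwarz for star-dotProduct
lemma cs_dot (c v : Fin 2 → ℂ) :
    ‖star c ⬝ᵥ v‖ ^ 2 ≤ (star c ⬝ᵥ c).re * (star v ⬝ᵥ v).re := by
  let c' : EuclideanSpace ℂ (Fin 2) := (WithLp.equiv 2 _).symm c
  let v' : EuclideanSpace ℂ (Fin 2) := (WithLp.equiv 2 _).symm v
  have h1 : inner ℂ c' v' = star c ⬝ᵥ v := by rw [dotProduct_comm]; rfl
  have h2 : inner ℂ c' c' = star c ⬝ᵥ c := by rw [dotProduct_comm]; rfl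
  have h3 : inner ℂ v' v' = star v ⬝ᵥ v := by rw [dotProduct_comm]; rfl
  have hcs := norm_inner_le_norm (𝕜 := ℂ) c' v'
  have hc : ‖c'‖ ^ 2 = (star c ⬝ᵥ c).re := by
    rw [← h2]; rw [← inner_self_eq_norm_sq (𝕜 := ℂ)]; rfl
  have hv : ‖v'‖ ^ 2 = (star v ⬝ᵥ v).re := by
    rw [← h3]; rw [← inner_self_eq_norm_sq (𝕜 := ℂ)]; rfl
  calc ‖star c ⬝ᵥ v‖ ^ 2 = ‖(inner ℂ c' v' : ℂ)‖ ^ 2 := by rw [h1]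
    _ ≤ (‖c'‖ * ‖v'‖) ^ 2 := pow_le_pow_left₀ (norm_nonneg _) hcs 2
    _ = (star c ⬝ᵥ c).re * (star v ⬝ᵥ v).re := by rw [mul_pow, hc, hv]

lemma key (a b v : Fin 2 → ℂ) (ha : star a ⬝ᵥ a = 1) (hb : star b ⬝ᵥ b = 1) :
    ‖star a ⬝ᵥ v‖ ^ 2 + ‖star b ⬝ᵥ v‖ ^ 2
      ≤ (1 + ‖star a ⬝ᵥ b‖) * (star v ⬝ᵥ v).re := by
  set α := star a ⬝ᵥ v with hα
  set β := star b ⬝ᵥ v with hβ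
  set s := star a ⬝ᵥ b with hs
  set S : ℝ := ‖α‖ ^ 2 + ‖β‖ ^ 2 with hS
  have hS0 : 0 ≤ S := by positivity
  set c : Fin 2 → ℂ := α • a + β • b with hc
  have hba : star b ⬝ᵥ a = starRingEnd ℂ s := by
    simp [hs, dotProduct, map_sum, mul_comm]
  have hstarc : star c = starRingEnd ℂ α • star a + starRingEnd ℂ β • star b := by
    simp [hc, star_add, star_smul]
  have hcv : star c ⬝ᵥ v = (S : ℂ) := by
    rw [hstarc, add_dotProduct, smul_dotProduct, smul_dotProduct, ← hα, ← hβ]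
    simp [hS, smul_eq_mul, Complex.mul_conj', Complex.sq_norm]
    rw [mul_comm ((starRingEnd ℂ) α) α, mul_comm ((starRingEnd ℂ) β) β,
      Complex.mul_conj, Complex.mul_conj]
  have hα2 : (starRingEnd ℂ α * α).re = ‖α‖ ^ 2 := by
    rw [mul_comm, Complex.mul_conj]; simp [Complex.normSq_eq_norm_sq, ← Complex.ofReal_pow]
  have hβ2 : (starRingEnd ℂ β * β).re = ‖β‖ ^ 2 := by
    rw [mul_comm, Complex.mul_conj]; simp [Complex.normSq_eq_norm_sq, ← Complex.ofReal_pow]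
  have hccEq : star c ⬝ᵥ c = starRingEnd ℂ α * α + starRingEnd ℂ β * β
      + (starRingEnd ℂ α * (β * s) + starRingEnd ℂ (starRingEnd ℂ α * (β * s))) := by
    rw [hstarc, hc]
    simp only [add_dotProduct, dotProduct_add, smul_dotProduct, dotProduct_smul, ← hs, hba, ha,
      hb, smul_eq_mul, mul_one, _root_.map_mul, Complex.conj_conj]
    ring
  have habs : (starRingEnd ℂ α * (β * s)).re
      ≤ ‖α‖ * ‖β‖ * ‖s‖ := by
    refine le_trans (Complex.re_le_norm _) ?_
    rw [norm_mul, norm_mul, Complex.norm_conj, ← mul_assoc]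
  have h2 : 2 * ‖α‖ * ‖β‖ ≤ S := by
    simpa [hS] using two_mul_le_add_sq (‖α‖) (‖β‖)
  have hs0 : 0 ≤ ‖s‖ := norm_nonneg _
  have hcc : (star c ⬝ᵥ c).re ≤ S * (1 + ‖s‖) := by
    rw [hccEq]
    simp only [Complex.add_re, Complex.conj_re, hα2, hβ2]
    nlinarith [habs, h2, hs0, sq_nonneg (‖α‖ - ‖β‖)]
  have hv0 : 0 ≤ (star v ⬝ᵥ v).re := by
    have h := inner_self_nonneg (𝕜 := ℂ) (x := ((WithLp.equiv 2 _).symm v : EuclideanSpace ℂ (Fin 2)))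
    change 0 ≤ (v ⬝ᵥ star v).re at h
    rw [dotProduct_comm] at h
    exact h
  have hmain := cs_dot c v
  rw [hcv] at hmain
  rw [show ‖((S : ℝ) : ℂ)‖ = S by rw [Complex.norm_real, Real.norm_eq_abs, abs_of_nonneg hS0]] at hmain
  have hchain : S * S ≤ S * ((1 + ‖s‖) * (star v ⬝ᵥ v).re) := by
    calc S * S = S ^ 2 := by ring
      _ ≤ (star c ⬝ᵥ c).re * (star v ⬝ᵥ v).re := hmain
      _ ≤ S * (1 + ‖s‖) * (star v ⬝ᵥ v).re := mul_le_mul_of_nonneg_right hcc hv0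
      _ = S * ((1 + ‖s‖) * (star v ⬝ᵥ v).re) := by ring
  rcases eq_or_lt_of_le hS0 with h0 | h0
  · have hz : S = 0 := h0.symm
    calc ‖α‖ ^ 2 + ‖β‖ ^ 2 = S := hS.symm
      _ = 0 := hz
      _ ≤ (1 + ‖s‖) * (star v ⬝ᵥ v).re := by positivity
  · exact hS ▸ le_of_mul_le_mul_left hchain h0

theorem stmt12 (a b : Fin 2 → ℂ) (ha : star a ⬝ᵥ a = 1) (hb : star b ⬝ᵥ b = 1)
    (ρ : Matrix (Fin 2) (Fin 2) ℂ) (hρ : ρ.PosSemidef) (htr : ρ.trace = 1) :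
    1 / 2 * (star a ⬝ᵥ (ρ *ᵥ a)).re + 1 / 2 * (star b ⬝ᵥ (ρ *ᵥ b)).re
      ≤ 1 / 2 * (1 + ‖star a ⬝ᵥ b‖) := by
  open scoped MatrixOrder Matrix.Norms.L2Operator in
  obtain ⟨B, hB⟩ := CStarAlgebra.nonneg_iff_eq_star_mul_self.mp hρ.nonneg
  rw [star_eq_conjTranspose] at hB
  subst hB
  have hquad : ∀ u : Fin 2 → ℂ, (star u ⬝ᵥ ((Bᴴ * B) *ᵥ u)).re
      = ∑ i, ‖star u ⬝ᵥ star (B i)‖ ^ 2 := by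
    intro u
    rw [← mulVec_mulVec, dotProduct_mulVec, vecMul_conjTranspose, star_star]
    rw [dotProduct, Complex.re_sum]
    refine Finset.sum_congr rfl fun i _ => ?_
    have h1 : star u ⬝ᵥ star (B i) = starRingEnd ℂ ((B *ᵥ u) i) := by
      simp [dotProduct, mulVec, map_sum, mul_comm]
    rw [h1, Pi.star_apply, Complex.norm_conj, Complex.sq_norm, Complex.star_def, mul_comm,
      Complex.mul_conj]
    simp
  have htrace : ∑ i, (star (star (B i)) ⬝ᵥ star (B i)).re = 1 := by
    have h1 : ((Bᴴ * B).trace).re = 1 := by rw [htr]; simp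
    rw [trace] at h1
    simp only [diag, mul_apply, conjTranspose_apply, Complex.re_sum] at h1
    simp only [star_star, dotProduct, Pi.star_apply, Complex.re_sum]
    rw [← h1, Finset.sum_comm]
    refine Finset.sum_congr rfl fun i _ => Finset.sum_congr rfl fun j _ => ?_
    rw [mul_comm]
  have hsum := Finset.sum_le_sum
    (fun i (_ : i ∈ Finset.univ) => key a b (star (B i)) ha hb)
  rw [Finset.sum_add_distrib, ← Finset.mul_sum] at hsum
  have hsum' : ∑ i, ‖star a ⬝ᵥ star (B i)‖ ^ 2
      + ∑ i, ‖star b ⬝ᵥ star (B i)‖ ^ 2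
      ≤ (1 + ‖star a ⬝ᵥ b‖) := by
    calc _ ≤ (1 + ‖star a ⬝ᵥ b‖) * ∑ i, (star (star (B i)) ⬝ᵥ star (B i)).re := hsum
      _ = _ := by rw [htrace, mul_one]
  rw [hquad a, hquad b]
  linarith
end

section
/- In the setting of Corollary: with pure input states |ψ_in⟩, |φ_in⟩ and rank-one PVM outcomes |e_m⟩⟨e_m|, |f_n⟩⟨f_n| on a qubit, and probability r of using the first measurement, the optimal value over unitary channels 𝒰(ρ)=UρU† of r·|⟨e_m|U|ψ_in⟩|² + (1−r)·|⟨f_n|U|φ_in⟩|² equals 1/2 + √( (r−1/2)² + r(1−r)·( |⟨ψ_in|φ_in⟩||⟨e_m|f_n⟩| + √((1−|⟨ψ_in|φ_in⟩|²)(1−|⟨e_m|f_n⟩|²)) )² ). -/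
open Matrix Kronecker
open scoped ComplexOrder

set_option maxHeartbeats 1000000

section Helpers
noncomputable def E (x : Fin 2 → ℂ) : EuclideanSpace ℂ (Fin 2) := WithLp.toLp 2 x

lemma dot_eq_inner (x y : Fin 2 → ℂ) :
    star x ⬝ᵥ y = inner (𝕜 := ℂ) (E x) (E y) := by
  simp [dotProduct, PiLp.inner_apply, RCLike.inner_apply, mul_comm, E]

lemma norm_sq_of_dot (x : Fin 2 → ℂ) : (‖E x‖ : ℝ)^2 = Complex.re (star x ⬝ᵥ x) := by
  have h2 := norm_sq_eq_re_inner (𝕜 := ℂ) (E x)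
  rw [h2, dot_eq_inner]
  rfl

lemma norm_one_of_dot (x : Fin 2 → ℂ) (hx : star x ⬝ᵥ x = 1) :
    ‖E x‖ = 1 := by
  have h := norm_sq_of_dot x
  rw [hx] at h
  simp at h
  rcases h with h | h
  · exact h
  · nlinarith [norm_nonneg (E x)]

lemma dot_conj (x y : Fin 2 → ℂ) : star y ⬝ᵥ x = star (star x ⬝ᵥ y) := by
  simp [dotProduct, Finset.sum_comm, star_sum, mul_comm]

lemma abs_dot_le (x y : Fin 2 → ℂ) :
    ‖star x ⬝ᵥ y‖ ≤ ‖E x‖ * ‖E y‖ := by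
  rw [dot_eq_inner]
  calc ‖inner (𝕜 := ℂ) (E x) (E y)‖
      = ‖inner (𝕜 := ℂ) (E x) (E y)‖ := rfl
    _ ≤ _ := norm_inner_le_norm _ _

lemma abs_dot_le_one (x y : Fin 2 → ℂ) (hx : star x ⬝ᵥ x = 1) (hy : star y ⬝ᵥ y = 1) :
    ‖star x ⬝ᵥ y‖ ≤ 1 := by
  have := abs_dot_le x y
  rw [norm_one_of_dot x hx, norm_one_of_dot y hy] at this
  linarith

lemma tri_cos (x y z : Fin 2 → ℂ) (hx : star x ⬝ᵥ x = 1) (hy : star y ⬝ᵥ y = 1)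
    (hz : star z ⬝ᵥ z = 1) :
    ‖star x ⬝ᵥ y‖ * ‖star y ⬝ᵥ z‖
      - Real.sqrt (1 - ‖star x ⬝ᵥ y‖^2) * Real.sqrt (1 - ‖star y ⬝ᵥ z‖^2)
      ≤ ‖star x ⬝ᵥ z‖ := by
  set k := star x ⬝ᵥ y with hk
  set l := star y ⬝ᵥ z with hl
  set x' : Fin 2 → ℂ := x - (star k) • y with hx'
  set z' : Fin 2 → ℂ := z - l • y with hz'
  have e1 : star x' ⬝ᵥ z' = (star x ⬝ᵥ z) - k * l := by
    rw [hx', hz']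
    simp only [star_sub, star_smul, star_star, sub_dotProduct, dotProduct_sub,
      smul_dotProduct, dotProduct_smul, hy, ← hk, ← hl]
    simp [smul_eq_mul]
  have e2 : star x' ⬝ᵥ x' = 1 - star k * k := by
    rw [hx']
    simp only [star_sub, star_smul, star_star, sub_dotProduct, dotProduct_sub,
      smul_dotProduct, dotProduct_smul, hx, hy, ← hk]
    have h1 : star y ⬝ᵥ x = star k := by
      rw [hk]; simp [dotProduct, star_sum, mul_comm]
    rw [h1]
    simp [smul_eq_mul]
    ring
  have e3 : star z' ⬝ᵥ z' = 1 - star l * l := by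
    rw [hz']
    simp only [star_sub, star_smul, sub_dotProduct, dotProduct_sub,
      smul_dotProduct, dotProduct_smul, hz, hy, ← hl]
    have h1 : star z ⬝ᵥ y = star l := by
      rw [hl]; simp [dotProduct, star_sum, mul_comm]
    rw [h1]
    simp [smul_eq_mul]
  have nx' : ‖E x'‖ = Real.sqrt (1 - ‖k‖ ^ 2) := by
    have h := norm_sq_of_dot x'
    rw [e2] at h
    have : Complex.re (1 - star k * k) = 1 - ‖k‖ ^ 2 := by
      rw [show star k * k = (Complex.normSq k : ℂ) by
        rw [Complex.star_def, mul_comm, Complex.mul_conj]]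
      simp [Complex.normSq_eq_norm_sq, ← Complex.ofReal_pow]
    rw [this] at h
    rw [← h, Real.sqrt_sq (norm_nonneg _)]
  have nz' : ‖E z'‖ = Real.sqrt (1 - ‖l‖ ^ 2) := by
    have h := norm_sq_of_dot z'
    rw [e3] at h
    have : Complex.re (1 - star l * l) = 1 - ‖l‖ ^ 2 := by
      rw [show star l * l = (Complex.normSq l : ℂ) by
        rw [Complex.star_def, mul_comm, Complex.mul_conj]]
      simp [Complex.normSq_eq_norm_sq, ← Complex.ofReal_pow]
    rw [this] at h
    rw [← h, Real.sqrt_sq (norm_nonneg _)]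
  have cs : ‖(star x ⬝ᵥ z) - k * l‖
      ≤ Real.sqrt (1 - ‖k‖ ^ 2) * Real.sqrt (1 - ‖l‖ ^ 2) := by
    rw [← e1, ← nx', ← nz']
    exact abs_dot_le x' z'
  have tri : ‖k * l‖ - ‖(star x ⬝ᵥ z) - k * l‖
      ≤ ‖star x ⬝ᵥ z‖ := by
    have h2 : ‖k * l‖ ≤ ‖star x ⬝ᵥ z‖
        + ‖(k * l) - (star x ⬝ᵥ z)‖ := by
      have := norm_add_le (star x ⬝ᵥ z) ((k*l) - (star x ⬝ᵥ z))
      simpa using this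
    have h3 : ‖(k * l) - (star x ⬝ᵥ z)‖
        = ‖(star x ⬝ᵥ z) - k * l‖ := by
      rw [norm_sub_rev]
    linarith
  rw [norm_mul] at tri
  linarith [cs, tri]

-- scalar optimization lemma
lemma scalarS (r p q F : ℝ) (hr0 : 0 ≤ r) (hr1 : r ≤ 1) (hp0 : 0 ≤ p) (hp1 : p ≤ 1)
    (hq0 : 0 ≤ q) (hq1 : q ≤ 1) (hF0 : 0 ≤ F)
    (hcon : p * q - Real.sqrt (1 - p^2) * Real.sqrt (1 - q^2) ≤ F) :
    r * p^2 + (1-r) * q^2 ≤ 1/2 + Real.sqrt ((r - 1/2)^2 + r*(1-r)*F^2) := by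
  set s := Real.sqrt (1 - p^2) with hsdef
  set t := Real.sqrt (1 - q^2) with htdef
  have hs0 : 0 ≤ s := Real.sqrt_nonneg _
  have ht0 : 0 ≤ t := Real.sqrt_nonneg _
  have hs2 : s^2 = 1 - p^2 := Real.sq_sqrt (by nlinarith)
  have ht2 : t^2 = 1 - q^2 := Real.sq_sqrt (by nlinarith)
  set R := Real.sqrt ((r - 1/2)^2 + r*(1-r)*F^2) with hRdef
  have hR0 : 0 ≤ R := Real.sqrt_nonneg _
  have hw0 : 0 ≤ r*(1-r)*F^2 := mul_nonneg (mul_nonneg hr0 (by linarith)) (sq_nonneg F)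
  have hR2 : R^2 = (r - 1/2)^2 + r*(1-r)*F^2 := Real.sq_sqrt (by nlinarith [sq_nonneg (r-1/2)])
  clear_value s t R
  rcases le_or_gt (r * p^2 + (1-r) * q^2) (1/2) with hL | hL
  · linarith
  · have key : (r*p^2+(1-r)*q^2-1/2)^2
        = (r-1/2)^2 + r*(1-r)*(p*q-s*t)^2 - (r*p*s-(1-r)*q*t)^2 := by
      linear_combination (r^2*p^2 - r*(1-r)*t^2) * hs2 + ((1-r)^2*q^2 - r*(1-r)*(1-p^2)) * ht2
    have main : (r*p^2+(1-r)*q^2-1/2)^2 ≤ R^2 := by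
      rcases le_or_gt 0 (p*q - s*t) with hc | hc
      · have h4 : (p*q - s*t)^2 ≤ F^2 := pow_le_pow_left₀ hc hcon 2
        have h5 : r*(1-r)*(p*q-s*t)^2 ≤ r*(1-r)*F^2 :=
          mul_le_mul_of_nonneg_left h4 (mul_nonneg hr0 (by linarith))
        linarith [key, hR2, sq_nonneg (r*p*s-(1-r)*q*t)]
      · have hpq1 : p^2 + q^2 ≤ 1 := by nlinarith [mul_nonneg hp0 hq0, mul_nonneg hs0 ht0]
        have h6 : (r*p^2+(1-r)*q^2-1/2)^2 ≤ (r-1/2)^2 := by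
          have hfac : (r*p^2+(1-r)*q^2 - r) * (r*p^2+(1-r)*q^2 - (1-r)) ≤ 0 := by
            rcases le_or_gt r (1/2) with hhalf | hhalf
            · have h7 : r*p^2+(1-r)*q^2 - (1-r) ≤ 0 := by nlinarith [sq_nonneg p]
              have h8 : 0 ≤ r*p^2+(1-r)*q^2 - r := by linarith
              nlinarith
            · have h7 : r*p^2+(1-r)*q^2 - r ≤ 0 := by nlinarith [sq_nonneg q]
              have h8 : 0 ≤ r*p^2+(1-r)*q^2 - (1-r) := by linarith
              nlinarith
          nlinarith
        linarith [hR2, hw0]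
    nlinarith [hR0, main, hL]

lemma tri_arccos_aux (p q w : ℝ) (hp0 : 0 ≤ p) (hp1 : p ≤ 1) (hq0 : 0 ≤ q) (hq1 : q ≤ 1)
    (hw0 : 0 ≤ w) (hw1 : w ≤ 1)
    (h : p * q - Real.sqrt (1 - p^2) * Real.sqrt (1 - q^2) ≤ w) :
    Real.arccos w ≤ Real.arccos p + Real.arccos q := by
  rcases le_or_gt Real.pi (Real.arccos p + Real.arccos q) with hpi | hpi
  · linarith [Real.arccos_le_pi w]
  · have hc : Real.cos (Real.arccos p + Real.arccos q) ≤ w := by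
      rw [Real.cos_add, Real.cos_arccos (by linarith) hp1, Real.cos_arccos (by linarith) hq1,
        Real.sin_arccos, Real.sin_arccos]
      linarith
    have h2 : Real.arccos w ≤ Real.arccos (Real.cos (Real.arccos p + Real.arccos q)) := by
      rw [Real.arccos_eq_pi_div_two_sub_arcsin, Real.arccos_eq_pi_div_two_sub_arcsin]
      have := Real.monotone_arcsin hc
      linarith
    rwa [Real.arccos_cos
      (by linarith [Real.arccos_nonneg p, Real.arccos_nonneg q]) (le_of_lt hpi)] at h2

-- zero from zero self-dot
lemma eq_zero_of_dot_self (w : Fin 2 → ℂ) (h : star w ⬝ᵥ w = 0) : w = 0 := by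
  have h1 : ‖E w‖^2 = 0 := by rw [norm_sq_of_dot, h]; simp
  have h2 : ‖E w‖ = 0 := by nlinarith [norm_nonneg (E w)]
  have : E w = 0 := norm_eq_zero.mp h2
  simpa [E] using this

-- Gram-Schmidt completion
lemma exists_ortho (ψ φ : Fin 2 → ℂ) (hψ : star ψ ⬝ᵥ ψ = 1) (hφ : star φ ⬝ᵥ φ = 1)
    (a : ℝ) (ha : star ψ ⬝ᵥ φ = (a : ℂ)) (ha0 : 0 ≤ a) :
    ∃ u : Fin 2 → ℂ, star u ⬝ᵥ u = 1 ∧ star ψ ⬝ᵥ u = 0 ∧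
      φ = (a : ℂ) • ψ + (Real.sqrt (1 - a^2) : ℂ) • u := by
  have ha1 : a ≤ 1 := by
    have := abs_dot_le_one ψ φ hψ hφ
    rwa [ha, Complex.norm_real, Real.norm_eq_abs, abs_of_nonneg ha0] at this
  set w : Fin 2 → ℂ := φ - (a : ℂ) • ψ with hw
  have hφψ : star φ ⬝ᵥ ψ = (a : ℂ) := by
    rw [dot_conj, ha]; simp
  have hww : star w ⬝ᵥ w = ((1 - a^2 : ℝ) : ℂ) := by
    rw [hw]
    simp only [star_sub, star_smul, sub_dotProduct, dotProduct_sub, smul_dotProduct,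
      dotProduct_smul, hψ, hφ, ha, hφψ]
    push_cast
    simp [smul_eq_mul]
    ring
  rcases eq_or_ne w 0 with hw0 | hw0
  · -- φ = a • ψ, A = 0
    have hA : Real.sqrt (1 - a^2) = 0 := by
      have : ((1 - a^2 : ℝ) : ℂ) = 0 := by rw [← hww, hw0]; simp
      have h2 : (1 - a^2 : ℝ) = 0 := by exact_mod_cast this
      rw [h2, Real.sqrt_zero]
    refine ⟨![-(star (ψ 1)), star (ψ 0)], ?_, ?_, ?_⟩
    · have := hψ
      simp [dotProduct, Fin.sum_univ_two] at this ⊢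
      ring_nf
      ring_nf at this
      linear_combination this
    · simp [dotProduct, Fin.sum_univ_two]
      ring
    · rw [hA]
      push_cast
      simp
      exact sub_eq_zero.mp hw0
  · -- A > 0
    have hA2 : (0:ℝ) < 1 - a^2 := by
      rcases lt_or_eq_of_le (by nlinarith : (0:ℝ) ≤ 1 - a^2) with h | h
      · exact h
      · exfalso
        apply hw0
        apply eq_zero_of_dot_self
        rw [hww, ← h]; simp
    set A := Real.sqrt (1 - a^2) with hAdef
    have hApos : 0 < A := Real.sqrt_pos.mpr hA2
    have hA2' : (A:ℝ)^2 = 1 - a^2 := Real.sq_sqrt (le_of_lt hA2)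
    refine ⟨((A : ℂ))⁻¹ • w, ?_, ?_, ?_⟩
    · simp only [star_smul, smul_dotProduct, dotProduct_smul, hww]
      rw [star_inv₀]
      rw [Complex.star_def, Complex.conj_ofReal]
      rw [smul_eq_mul, smul_eq_mul]
      rw [show ((1 - a^2 : ℝ) : ℂ) = (A:ℂ)^2 by exact_mod_cast congrArg Complex.ofReal hA2'.symm]
      have hAne : (A:ℂ) ≠ 0 := by
        exact_mod_cast Complex.ofReal_ne_zero.mpr (ne_of_gt hApos)
      field_simp
    · have hψw : star ψ ⬝ᵥ w = 0 := by
        rw [hw]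
        simp only [dotProduct_sub, dotProduct_smul, hψ, ha]
        simp
      simp only [dotProduct_smul, hψw]
      simp
    · rw [smul_smul]
      have : (A:ℂ) * ((A:ℂ))⁻¹ = 1 := by
        apply mul_inv_cancel₀
        exact_mod_cast ne_of_gt (by exact_mod_cast hApos : (0:ℝ) < A)
      rw [this, one_smul, hw]
      module

noncomputable def colMat (u v : Fin 2 → ℂ) : Matrix (Fin 2) (Fin 2) ℂ :=
  Matrix.of fun i j => ![u, v] j i

lemma colMat_unitary (u v : Fin 2 → ℂ) (huu : star u ⬝ᵥ u = 1) (hvv : star v ⬝ᵥ v = 1)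
    (huv : star u ⬝ᵥ v = 0) : colMat u v ∈ Matrix.unitaryGroup (Fin 2) ℂ := by
  have hvu : star v ⬝ᵥ u = 0 := by rw [dot_conj, huv]; simp
  rw [Matrix.mem_unitaryGroup_iff']
  ext j k
  simp only [Matrix.mul_apply, Matrix.star_apply, colMat, Matrix.of_apply, Matrix.one_apply]
  simp only [dotProduct, Fin.sum_univ_two] at huu hvv huv hvu
  fin_cases j <;> fin_cases k <;>
    simp [Fin.sum_univ_two] <;>
    [exact huu; exact huv; exact hvu; exact hvv]

lemma colMat_conjT_mulVec (u v x : Fin 2 → ℂ) :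
    (colMat u v)ᴴ *ᵥ x = ![star u ⬝ᵥ x, star v ⬝ᵥ x] := by
  funext j
  fin_cases j <;>
    simp [colMat, Matrix.mulVec, dotProduct, Fin.sum_univ_two, Matrix.conjTranspose_apply]

lemma colMat_mulVec (u v : Fin 2 → ℂ) (c₁ c₂ : ℂ) :
    colMat u v *ᵥ ![c₁, c₂] = c₁ • u + c₂ • v := by
  funext i
  simp [colMat, Matrix.mulVec, dotProduct, Fin.sum_univ_two, mul_comm]

lemma dot_smul_add (g u v : Fin 2 → ℂ) (c₁ c₂ : ℂ) :
    star g ⬝ᵥ (c₁ • u + c₂ • v) = c₁ * (star g ⬝ᵥ u) + c₂ * (star g ⬝ᵥ v) := by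
  simp only [dotProduct_add, dotProduct_smul]
  simp [smul_eq_mul]

noncomputable def rotMat (x : ℝ) : Matrix (Fin 2) (Fin 2) ℂ :=
  !![(Real.cos x : ℂ), -(Real.sin x : ℂ); (Real.sin x : ℂ), (Real.cos x : ℂ)]

lemma rotMat_unitary (x : ℝ) : rotMat x ∈ Matrix.unitaryGroup (Fin 2) ℂ := by
  rw [Matrix.mem_unitaryGroup_iff']
  ext j k
  simp only [Matrix.mul_apply, Matrix.star_apply, rotMat, Matrix.one_apply]
  have h := Real.sin_sq_add_cos_sq x
  fin_cases j <;> fin_cases k <;>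
    simp [Fin.sum_univ_two, Complex.star_def, Complex.conj_ofReal,
      -Complex.ofReal_cos, -Complex.ofReal_sin] <;>
    norm_cast <;>
    nlinarith [h]

lemma rotMat_mulVec (x : ℝ) (c₁ c₂ : ℂ) :
    rotMat x *ᵥ ![c₁, c₂] = ![(Real.cos x : ℂ) * c₁ - (Real.sin x : ℂ) * c₂,
      (Real.sin x : ℂ) * c₁ + (Real.cos x : ℂ) * c₂] := by
  funext i
  fin_cases i <;> simp [rotMat, Matrix.mulVec, dotProduct, Fin.sum_univ_two] <;> ring

lemma abs_dot_comm (x y : Fin 2 → ℂ) :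
    ‖star x ⬝ᵥ y‖ = ‖star y ⬝ᵥ x‖ := by
  rw [dot_conj x y]; exact (Complex.norm_conj _).symm

lemma d_tri (x y z : Fin 2 → ℂ) (hx : star x ⬝ᵥ x = 1) (hy : star y ⬝ᵥ y = 1)
    (hz : star z ⬝ᵥ z = 1) :
    Real.arccos (‖star x ⬝ᵥ z‖)
      ≤ Real.arccos (‖star x ⬝ᵥ y‖) + Real.arccos (‖star y ⬝ᵥ z‖) :=
  tri_arccos_aux _ _ _ (norm_nonneg _) (abs_dot_le_one x y hx hy)
    (norm_nonneg _) (abs_dot_le_one y z hy hz)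
    (norm_nonneg _) (abs_dot_le_one x z hx hz)
    (tri_cos x y z hx hy hz)

lemma dot_unitary (U : Matrix (Fin 2) (Fin 2) ℂ) (hU : U ∈ Matrix.unitaryGroup (Fin 2) ℂ)
    (x y : Fin 2 → ℂ) : star (U *ᵥ x) ⬝ᵥ (U *ᵥ y) = star x ⬝ᵥ y := by
  rw [Matrix.star_mulVec, Matrix.dotProduct_mulVec, Matrix.vecMul_vecMul,
    ← Matrix.star_eq_conjTranspose,
    (Matrix.mem_unitaryGroup_iff'.mp hU : star U * U = 1)]
  simp [Matrix.vecMul_one]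

lemma arccos_le_pi_div_two' (x : ℝ) (hx : 0 ≤ x) : Real.arccos x ≤ Real.pi / 2 := by
  rw [Real.arccos_eq_pi_div_two_sub_arcsin]
  linarith [Real.arcsin_nonneg.mpr hx]

lemma upper_bound (r : ℝ) (hr0 : 0 ≤ r) (hr1 : r ≤ 1)
    (ψ φ e f : Fin 2 → ℂ)
    (hψ : star ψ ⬝ᵥ ψ = 1) (hφ : star φ ⬝ᵥ φ = 1)
    (he : star e ⬝ᵥ e = 1) (hf : star f ⬝ᵥ f = 1)
    (U : Matrix (Fin 2) (Fin 2) ℂ) (hU : U ∈ Matrix.unitaryGroup (Fin 2) ℂ) :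
    r * ‖star e ⬝ᵥ (U *ᵥ ψ)‖ ^ 2
      + (1 - r) * ‖star f ⬝ᵥ (U *ᵥ φ)‖ ^ 2
    ≤ 1 / 2 + Real.sqrt ((r - 1 / 2) ^ 2
          + r * (1 - r) * (‖star ψ ⬝ᵥ φ‖ * ‖star e ⬝ᵥ f‖
            + Real.sqrt ((1 - ‖star ψ ⬝ᵥ φ‖ ^ 2)
                * (1 - ‖star e ⬝ᵥ f‖ ^ 2))) ^ 2) := by
  set m := U *ᵥ ψ with hmdef
  set n := U *ᵥ φ with hndef
  have hm : star m ⬝ᵥ m = 1 := by rw [hmdef, dot_unitary U hU, hψ]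
  have hn : star n ⬝ᵥ n = 1 := by rw [hndef, dot_unitary U hU, hφ]
  have hmn : star m ⬝ᵥ n = star ψ ⬝ᵥ φ := by rw [hmdef, hndef, dot_unitary U hU]
  set a := ‖star ψ ⬝ᵥ φ‖ with hadef
  set b := ‖star e ⬝ᵥ f‖ with hbdef
  set p := ‖star e ⬝ᵥ m‖ with hpdef
  set q := ‖star f ⬝ᵥ n‖ with hqdef
  have ha0 : 0 ≤ a := norm_nonneg _
  have hb0 : 0 ≤ b := norm_nonneg _
  have hp0 : 0 ≤ p := norm_nonneg _
  have hq0 : 0 ≤ q := norm_nonneg _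
  have ha1 : a ≤ 1 := abs_dot_le_one ψ φ hψ hφ
  have hb1 : b ≤ 1 := abs_dot_le_one e f he hf
  have hp1 : p ≤ 1 := abs_dot_le_one e m he hm
  have hq1 : q ≤ 1 := abs_dot_le_one f n hf hn
  -- angles
  set α := Real.arccos a with hαdef
  set β := Real.arccos b with hβdef
  set θ₁ := Real.arccos p with hθ₁def
  set θ₂ := Real.arccos q with hθ₂def
  have hamn : ‖star m ⬝ᵥ n‖ = a := by rw [hmn]
  -- triangle inequalities
  have t1 : β ≤ θ₁ + α + θ₂ := by
    have h1 := d_tri e m f he hm hf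
    have h2 := d_tri m n f hm hn hf
    rw [hamn] at h2
    rw [abs_dot_comm n f] at h2
    rw [hβdef, hθ₁def, hθ₂def, hαdef, hqdef]
    calc Real.arccos b ≤ Real.arccos p + Real.arccos (‖star m ⬝ᵥ f‖) := h1
      _ ≤ Real.arccos p + (Real.arccos a + Real.arccos (‖star f ⬝ᵥ n‖)) := by
          linarith
      _ = _ := by ring
  have t2 : α ≤ θ₁ + β + θ₂ := by
    have h1 := d_tri m e n hm he hn
    have h2 := d_tri e f n he hf hn
    rw [hamn] at h1
    rw [abs_dot_comm m e] at h1
    rw [hβdef, hθ₁def, hθ₂def, hαdef, hqdef, hpdef]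
    calc Real.arccos a ≤ Real.arccos (‖star e ⬝ᵥ m‖)
          + Real.arccos (‖star e ⬝ᵥ n‖) := h1
      _ ≤ Real.arccos (‖star e ⬝ᵥ m‖)
          + (Real.arccos b + Real.arccos (‖star f ⬝ᵥ n‖)) := by linarith
      _ = _ := by ring
  -- cos bounds
  have hcon : p * q - Real.sqrt (1 - p^2) * Real.sqrt (1 - q^2)
      ≤ a * b + Real.sqrt ((1 - a^2) * (1 - b^2)) := by
    have e1 : p * q - Real.sqrt (1 - p^2) * Real.sqrt (1 - q^2) = Real.cos (θ₁ + θ₂) := by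
      rw [Real.cos_add, hθ₁def, hθ₂def, Real.cos_arccos (by linarith) hp1,
        Real.cos_arccos (by linarith) hq1, Real.sin_arccos, Real.sin_arccos]
    have e2 : a * b + Real.sqrt ((1 - a^2) * (1 - b^2)) = Real.cos (α - β) := by
      rw [Real.cos_sub, hαdef, hβdef, Real.cos_arccos (by linarith) ha1,
        Real.cos_arccos (by linarith) hb1, Real.sin_arccos, Real.sin_arccos,
        Real.sqrt_mul (by nlinarith)]
    rw [e1, e2, ← Real.cos_abs (α - β)]
    apply Real.cos_le_cos_of_nonneg_of_le_pi (abs_nonneg _)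
    · have := arccos_le_pi_div_two' p hp0
      have := arccos_le_pi_div_two' q hq0
      rw [hθ₁def, hθ₂def]; linarith [Real.pi_pos]
    · rw [abs_le]; constructor <;> linarith
  have := scalarS r p q _ hr0 hr1 hp0 hp1 hq0 hq1
    (by positivity) hcon
  rw [hpdef, hqdef, hmdef, hndef] at this
  exact this

set_option maxHeartbeats 1000000 in
lemma achievable_real (r : ℝ) (hr0 : 0 ≤ r) (hr1 : r ≤ 1)
    (ψ φ e f : Fin 2 → ℂ)
    (hψ : star ψ ⬝ᵥ ψ = 1) (hφ : star φ ⬝ᵥ φ = 1)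
    (he : star e ⬝ᵥ e = 1) (hf : star f ⬝ᵥ f = 1)
    (a b : ℝ) (ha0 : 0 ≤ a) (hb0 : 0 ≤ b)
    (hc : star ψ ⬝ᵥ φ = (a : ℂ)) (hd : star e ⬝ᵥ f = (b : ℂ)) :
    ∃ U ∈ Matrix.unitaryGroup (Fin 2) ℂ,
      r * ‖star e ⬝ᵥ (U *ᵥ ψ)‖ ^ 2
        + (1 - r) * ‖star f ⬝ᵥ (U *ᵥ φ)‖ ^ 2
      = 1 / 2 + Real.sqrt ((r - 1/2)^2
          + r * (1-r) * (a * b + Real.sqrt ((1 - a^2) * (1 - b^2)))^2) := by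
  have ha1 : a ≤ 1 := by
    have := abs_dot_le_one ψ φ hψ hφ
    rwa [hc, Complex.norm_real, Real.norm_eq_abs, abs_of_nonneg ha0] at this
  have hb1 : b ≤ 1 := by
    have := abs_dot_le_one e f he hf
    rwa [hd, Complex.norm_real, Real.norm_eq_abs, abs_of_nonneg hb0] at this
  obtain ⟨u, huu, hψu, hφdec⟩ := exists_ortho ψ φ hψ hφ a hc ha0
  obtain ⟨v, hvv, hev, hfdec⟩ := exists_ortho e f he hf b hd hb0
  set A := Real.sqrt (1 - a^2) with hAdef
  set B := Real.sqrt (1 - b^2) with hBdef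
  have hA2 : A^2 = 1 - a^2 := Real.sq_sqrt (by nlinarith)
  have hB2 : B^2 = 1 - b^2 := Real.sq_sqrt (by nlinarith)
  set F := a*b + A*B with hFdef
  set G := a*B - b*A with hGdef
  have hFG : F^2 + G^2 = 1 := by linear_combination (b^2 + B^2) * hA2 + hB2
  have hG2 : G^2 = 1 - F^2 := by linarith
  set P := r + (1-r)*(2*F^2-1) with hPdef
  set Q := 2*(1-r)*F*G with hQdef
  set N := Real.sqrt (P^2 + Q^2) with hNdef
  have hN0 : 0 ≤ N := Real.sqrt_nonneg _
  have hN2 : N^2 = P^2 + Q^2 := Real.sq_sqrt (by positivity)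
  set z : ℂ := (P : ℂ) + (Q : ℂ) * Complex.I with hzdef
  have hzre : z.re = P := by simp [hzdef]
  have hzim : z.im = Q := by simp [hzdef]
  have habsz : ‖z‖ = N := by
    rw [Complex.norm_def, hNdef]
    congr 1
    rw [Complex.normSq_apply, hzre, hzim]
    ring
  set x : ℝ := if z = 0 then 0 else z.arg / 2 with hxdef
  have key : P * Real.cos (2*x) + Q * Real.sin (2*x) = N := by
    rcases eq_or_ne z 0 with hz | hz
    · have hP : P = 0 := by rw [← hzre, hz]; simp
      have hQ : Q = 0 := by rw [← hzim, hz]; simp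
      have hN : N = 0 := by rw [hNdef, hP, hQ]; simp
      rw [hP, hQ, hN]; ring
    · have hx : x = z.arg / 2 := by rw [hxdef, if_neg hz]
      have h2x : 2 * x = z.arg := by rw [hx]; ring
      rw [h2x, Complex.cos_arg hz, Complex.sin_arg, hzre, hzim, habsz]
      have hNpos : 0 < N := by
        rw [← habsz]
        exact norm_pos_iff.mpr hz
      field_simp
      linarith [hN2]
  -- the unitary
  set W := colMat ψ u with hWdef
  set V := colMat e v with hVdef
  set U := V * (rotMat x * Wᴴ) with hUdef
  have hUmem : U ∈ Matrix.unitaryGroup (Fin 2) ℂ := by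
    apply mul_mem (colMat_unitary e v he hvv hev)
    apply mul_mem (rotMat_unitary x)
    rw [← Matrix.star_eq_conjTranspose]
    exact Unitary.star_mem (colMat_unitary ψ u hψ huu hψu)
  have huψ : star u ⬝ᵥ ψ = 0 := by rw [dot_conj, hψu]; simp
  have hve : star v ⬝ᵥ e = 0 := by rw [dot_conj, hev]; simp
  have huφ : star u ⬝ᵥ φ = (A : ℂ) := by
    rw [hφdec, dot_smul_add, huψ, huu]; simp
  have hvf : star v ⬝ᵥ f = (B : ℂ) := by
    rw [hfdec, dot_smul_add, hve, hvv]; simp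
  have hfe : star f ⬝ᵥ e = (b : ℂ) := by
    rw [dot_conj, hd]; simp [Complex.star_def, Complex.conj_ofReal]
  have hfv : star f ⬝ᵥ v = (B : ℂ) := by
    rw [dot_conj, hvf]; simp [Complex.star_def, Complex.conj_ofReal]
  -- value on ψ
  have hUψ : U *ᵥ ψ = (Real.cos x : ℂ) • e + (Real.sin x : ℂ) • v := by
    rw [hUdef, ← Matrix.mulVec_mulVec, ← Matrix.mulVec_mulVec, hWdef, colMat_conjT_mulVec,
      hψ, huψ, rotMat_mulVec]
    simp only [mul_one, mul_zero, sub_zero, add_zero]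
    rw [hVdef, colMat_mulVec]
  have hUφ : U *ᵥ φ = ((Real.cos x : ℂ) * (a:ℂ) - (Real.sin x : ℂ) * (A:ℂ)) • e
      + ((Real.sin x : ℂ) * (a:ℂ) + (Real.cos x : ℂ) * (A:ℂ)) • v := by
    rw [hUdef, ← Matrix.mulVec_mulVec, ← Matrix.mulVec_mulVec, hWdef, colMat_conjT_mulVec,
      hc, huφ, rotMat_mulVec, hVdef, colMat_mulVec]
  have val1 : star e ⬝ᵥ (U *ᵥ ψ) = (Real.cos x : ℂ) := by
    rw [hUψ, dot_smul_add, he, hev]; simp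
  have val2 : star f ⬝ᵥ (U *ᵥ φ) = ((F*Real.cos x + G*Real.sin x : ℝ) : ℂ) := by
    rw [hUφ, dot_smul_add, hfe, hfv, hFdef, hGdef]
    push_cast
    ring
  refine ⟨U, hUmem, ?_⟩
  rw [val1, val2, Complex.norm_real, Complex.norm_real, Real.norm_eq_abs, Real.norm_eq_abs, sq_abs, sq_abs]
  have obj : r * Real.cos x^2 + (1-r)*(F*Real.cos x+G*Real.sin x)^2 = 1/2 + N/2 := by
    have hsx : Real.sin x^2 = 1 - Real.cos x^2 := Real.sin_sq x
    have hobj2 : r * Real.cos x^2 + (1-r)*(F*Real.cos x+G*Real.sin x)^2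
        = 1/2 + (P*Real.cos (2*x) + Q*Real.sin (2*x))/2 := by
      rw [Real.cos_two_mul, Real.sin_two_mul, hPdef, hQdef]
      linear_combination ((1-r)*(1-F^2)) * hsx + ((1-r)*Real.sin x^2) * hG2
    rw [hobj2, key]
  rw [obj]
  have hFthm : a*b + Real.sqrt ((1-a^2)*(1-b^2)) = F := by
    rw [hFdef, Real.sqrt_mul (by nlinarith : (0:ℝ) ≤ 1 - a^2)]
  rw [hFthm]
  have hPQ : (r-1/2)^2 + r*(1-r)*F^2 = (N/2)^2 := by
    have h8 : P^2 + Q^2 = (2*r-1)^2 + 4*r*(1-r)*F^2 := by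
      linear_combination (4*(1-r)^2*F^2) * hG2
    rw [div_pow, hN2, h8]; ring
  rw [hPQ, Real.sqrt_sq (by positivity)]

end Helpers

lemma phase_vec (x y : Fin 2 → ℂ) (hx : star x ⬝ᵥ x = 1) (hy : star y ⬝ᵥ y = 1) :
    ∃ γ : ℂ, ‖γ‖ = 1 ∧ star x ⬝ᵥ (γ • y) = ((‖star x ⬝ᵥ y‖ : ℝ) : ℂ) := by
  rcases eq_or_ne (star x ⬝ᵥ y) 0 with h0 | h0
  · exact ⟨1, by simp, by simp [dotProduct_smul, h0]⟩
  · refine ⟨(‖star x ⬝ᵥ y‖ : ℂ) / (star x ⬝ᵥ y), ?_, ?_⟩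
    · rw [norm_div, Complex.norm_real, Real.norm_eq_abs, abs_of_nonneg (norm_nonneg _),
        div_self (norm_ne_zero_iff.mpr h0)]
    · rw [dotProduct_smul, smul_eq_mul, div_mul_cancel₀ _ h0]

lemma smul_unit (y : Fin 2 → ℂ) (hy : star y ⬝ᵥ y = 1) (γ : ℂ) (hγ : ‖γ‖ = 1) :
    star (γ • y) ⬝ᵥ (γ • y) = 1 := by
  rw [star_smul, smul_dotProduct, dotProduct_smul, smul_eq_mul, smul_eq_mul, hy, mul_one]
  rw [show star γ * γ = (Complex.normSq γ : ℂ) by rw [Complex.star_def, mul_comm, Complex.mul_conj]]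
  rw [Complex.normSq_eq_norm_sq, hγ]
  norm_num

theorem stmt13 (r : ℝ) (hr0 : 0 ≤ r) (hr1 : r ≤ 1)
    (ψ φ e f : Fin 2 → ℂ)
    (hψ : star ψ ⬝ᵥ ψ = 1) (hφ : star φ ⬝ᵥ φ = 1)
    (he : star e ⬝ᵥ e = 1) (hf : star f ⬝ᵥ f = 1) :
    sSup {x : ℝ | ∃ U ∈ Matrix.unitaryGroup (Fin 2) ℂ,
        x = r * ‖star e ⬝ᵥ (U *ᵥ ψ)‖ ^ 2
          + (1 - r) * ‖star f ⬝ᵥ (U *ᵥ φ)‖ ^ 2}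
      = 1 / 2 + Real.sqrt ((r - 1 / 2) ^ 2
          + r * (1 - r) * (‖star ψ ⬝ᵥ φ‖ * ‖star e ⬝ᵥ f‖
            + Real.sqrt ((1 - ‖star ψ ⬝ᵥ φ‖ ^ 2)
                * (1 - ‖star e ⬝ᵥ f‖ ^ 2))) ^ 2) := by
  set RHS := 1 / 2 + Real.sqrt ((r - 1 / 2) ^ 2
          + r * (1 - r) * (‖star ψ ⬝ᵥ φ‖ * ‖star e ⬝ᵥ f‖
            + Real.sqrt ((1 - ‖star ψ ⬝ᵥ φ‖ ^ 2)
                * (1 - ‖star e ⬝ᵥ f‖ ^ 2))) ^ 2) with hRHS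
  -- achievability via phase reduction
  obtain ⟨γ, hγ1, hγ2⟩ := phase_vec ψ φ hψ hφ
  obtain ⟨δ, hδ1, hδ2⟩ := phase_vec e f he hf
  set φ' := γ • φ with hφ'def
  set f' := δ • f with hf'def
  have hφ' : star φ' ⬝ᵥ φ' = 1 := smul_unit φ hφ γ hγ1
  have hf' : star f' ⬝ᵥ f' = 1 := smul_unit f hf δ hδ1
  obtain ⟨U₀, hU₀, hval₀⟩ := achievable_real r hr0 hr1 ψ φ' e f' hψ hφ' he hf'
    (‖star ψ ⬝ᵥ φ‖) (‖star e ⬝ᵥ f‖)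
    (norm_nonneg _) (norm_nonneg _) hγ2 hδ2
  have habs1 : ‖star f' ⬝ᵥ (U₀ *ᵥ φ')‖ = ‖star f ⬝ᵥ (U₀ *ᵥ φ)‖ := by
    rw [hφ'def, hf'def, Matrix.mulVec_smul, star_smul, smul_dotProduct, dotProduct_smul,
      smul_eq_mul, smul_eq_mul, norm_mul, norm_mul]
    rw [show ‖star δ‖ = 1 by rwa [← Complex.norm_conj] at hδ1, hγ1]
    ring
  rw [habs1] at hval₀
  -- upper bound for every element
  have hub : ∀ y ∈ {x : ℝ | ∃ U ∈ Matrix.unitaryGroup (Fin 2) ℂ,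
        x = r * ‖star e ⬝ᵥ (U *ᵥ ψ)‖ ^ 2
          + (1 - r) * ‖star f ⬝ᵥ (U *ᵥ φ)‖ ^ 2}, y ≤ RHS := by
    rintro y ⟨U, hU, rfl⟩
    exact upper_bound r hr0 hr1 ψ φ e f hψ hφ he hf U hU
  apply le_antisymm
  · apply csSup_le
    · exact ⟨_, ⟨U₀, hU₀, rfl⟩⟩
    · exact hub
  · apply le_csSup ⟨RHS, hub⟩
    exact ⟨U₀, hU₀, hval₀.symm⟩
end

section
/- With input states |ψ_in⟩ = |0⟩ and |φ_in⟩ = cos(θ/2)|0⟩ + sin(θ/2)|1⟩ (0 ≤ θ ≤ π), measurement outcomes |e⟩ = |0⟩ and |f⟩ = (|0⟩+|1⟩)/√2, and r = 1/2, the maximum over 2×2 unitaries U of (1/2)|⟨e|U|ψ_in⟩|² + (1/2)|⟨f|U|φ_in⟩|² equals 1/2 + (1/2)·cos(θ/2 − π/4). -/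
open Matrix Kronecker
open scoped ComplexOrder


lemma key_s14 (x y w c k m : ℝ) (hw : 0 ≤ w) (hx : x^2 + y^2 ≤ 1) (hwy : w^2 + y^2 = 1)
    (hk : 0 ≤ k) (hck : c^2 + k^2 = 1) (hm : 0 ≤ m) (hm2 : m^2 = 2 + 2*k) :
    x + c*y + k*w ≤ m := by
  have hxw : x ≤ w := by nlinarith
  nlinarith [sq_nonneg ((1+k)*y - c*w), sq_nonneg ((1+k)*w + c*y - m),
    sq_nonneg ((1+k)*w + c*y + m), mul_nonneg hk hw]

set_option maxHeartbeats 1600000 in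
lemma ubd (θ : ℝ) (hθ0 : 0 ≤ θ) (hθπ : θ ≤ Real.pi)
    (U : Matrix (Fin 2) (Fin 2) ℂ) (hU : U ∈ Matrix.unitaryGroup (Fin 2) ℂ) :
    1 / 2 * ‖(star (![1, 0] : Fin 2 → ℂ) ⬝ᵥ (U *ᵥ ![1, 0]))‖ ^ 2
      + 1 / 2 * ‖
          (star (![((1 / Real.sqrt 2 : ℝ) : ℂ), ((1 / Real.sqrt 2 : ℝ) : ℂ)])
            ⬝ᵥ (U *ᵥ ![((Real.cos (θ / 2) : ℝ) : ℂ), ((Real.sin (θ / 2) : ℝ) : ℂ)]))‖ ^ 2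
      ≤ 1 / 2 + 1 / 2 * Real.cos (θ / 2 - Real.pi / 4) := by
  have hπ := Real.pi_pos
  set C := Real.cos (θ/2) with hCdef
  set S := Real.sin (θ/2) with hSdef
  have hC : 0 ≤ C := Real.cos_nonneg_of_mem_Icc ⟨by linarith, by linarith⟩
  have hS : 0 ≤ S := Real.sin_nonneg_of_nonneg_of_le_pi (by linarith) (by linarith)
  have hpyth : C^2 + S^2 = 1 := by
    have := Real.sin_sq_add_cos_sq (θ/2); linarith
  set p := U 0 0; set q := U 1 0; set r := U 0 1; set s := U 1 1
  -- columns orthonormal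
  have hcol := Matrix.mem_unitaryGroup_iff'.mp hU
  have hrow := Matrix.mem_unitaryGroup_iff.mp hU
  have h1 : Complex.normSq p + Complex.normSq q = 1 := by
    have := congrFun (congrFun hcol 0) 0
    simp only [Matrix.mul_apply, Fin.sum_univ_two, Matrix.one_apply, Matrix.star_apply] at this
    have := congrArg Complex.re this
    simpa [Complex.normSq_apply, Complex.mul_re] using this
  have h2 : Complex.normSq r + Complex.normSq s = 1 := by
    have := congrFun (congrFun hcol 1) 1
    simp only [Matrix.mul_apply, Fin.sum_univ_two, Matrix.one_apply, Matrix.star_apply] at this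
    have := congrArg Complex.re this
    simpa [Complex.normSq_apply, Complex.mul_re] using this
  have h3 : (r * (starRingEnd ℂ) s).re = - (p * (starRingEnd ℂ) q).re := by
    have h := congrFun (congrFun hrow 0) 1
    simp only [Matrix.mul_apply, Fin.sum_univ_two, Matrix.one_apply, Matrix.star_apply] at h
    have := congrArg Complex.re h
    simp only [Complex.add_re, if_neg (by norm_num : ¬(0:Fin 2) = 1), Complex.zero_re] at this
    simp only [Complex.mul_re, Complex.conj_re, Complex.conj_im, RCLike.star_def] at this ⊢
    linarith
  set t := (p * (starRingEnd ℂ) q).re with htdef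
  have htsq : t^2 ≤ Complex.normSq p * Complex.normSq q := by
    have h := Complex.normSq_apply (p * (starRingEnd ℂ) q)
    have h2' : Complex.normSq (p * (starRingEnd ℂ) q) = Complex.normSq p * Complex.normSq q := by
      simp [Complex.normSq_mul, Complex.normSq_conj]
    nlinarith [sq_nonneg (p * (starRingEnd ℂ) q).im]
  have hu2 : (‖(p+q)‖)^2 = 1 + 2*t := by
    have ht' : t = p.re*q.re + p.im*q.im := by
      simp [htdef, Complex.mul_re, Complex.conj_re, Complex.conj_im]
    rw [Complex.sq_norm]
    simp [Complex.normSq_add]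
    linarith
  have hv2 : (‖(r+s)‖)^2 = 1 - 2*t := by
    have ht' : (r * (starRingEnd ℂ) s).re = r.re*s.re + r.im*s.im := by
      simp [Complex.mul_re, Complex.conj_re, Complex.conj_im]
    rw [Complex.sq_norm]
    simp [Complex.normSq_add]
    linarith
  -- expressions
  have e1 : star (![1, 0] : Fin 2 → ℂ) ⬝ᵥ (U *ᵥ ![1, 0]) = p := by
    simp [dotProduct, Matrix.mulVec, Fin.sum_univ_two]
    rfl
  have e2 : star (![((1 / Real.sqrt 2 : ℝ) : ℂ), ((1 / Real.sqrt 2 : ℝ) : ℂ)])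
      ⬝ᵥ (U *ᵥ ![((C : ℝ) : ℂ), ((S : ℝ) : ℂ)])
      = ((1 / Real.sqrt 2 : ℝ) : ℂ) * ((C:ℂ)*(p+q) + (S:ℂ)*(r+s)) := by
    simp [dotProduct, Matrix.mulVec, Fin.sum_univ_two]
    ring
  rw [e1, e2]
  have hs2 : (0:ℝ) < Real.sqrt 2 := Real.sqrt_pos.mpr (by norm_num)
  have habs2 : ‖(((1 / Real.sqrt 2 : ℝ) : ℂ) * ((C:ℂ)*(p+q) + (S:ℂ)*(r+s)))‖
      = (1 / Real.sqrt 2) * ‖((C:ℂ)*(p+q) + (S:ℂ)*(r+s))‖ := by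
    rw [norm_mul, Complex.norm_real, Real.norm_of_nonneg (by positivity)]
  rw [habs2]
  set u := ‖(p+q)‖
  set v := ‖(r+s)‖
  have htri : ‖((C:ℂ)*(p+q) + (S:ℂ)*(r+s))‖ ≤ C*u + S*v := by
    calc ‖((C:ℂ)*(p+q) + (S:ℂ)*(r+s))‖
        ≤ ‖((C:ℂ)*(p+q))‖ + ‖((S:ℂ)*(r+s))‖ := norm_add_le _ _
      _ = C*u + S*v := by
          rw [norm_mul, norm_mul, Complex.norm_real, Complex.norm_real,
            Real.norm_of_nonneg hC, Real.norm_of_nonneg hS]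
  have hu0 : 0 ≤ u := norm_nonneg _
  have hv0 : 0 ≤ v := norm_nonneg _
  have hkey := key_s14 (2*Complex.normSq p - 1) (2*t) (u*v) (C^2 - S^2) (2*C*S)
    (Real.sqrt 2 * (C+S))
    (by positivity)
    (by nlinarith [Complex.normSq_nonneg p, Complex.normSq_nonneg q])
    (by nlinarith)
    (by positivity)
    (by nlinarith)
    (by positivity)
    (by nlinarith [Real.sq_sqrt (by norm_num : (0:ℝ) ≤ 2)])
  -- assemble
  have habsp : ‖p‖ ^ 2 = Complex.normSq p := Complex.sq_norm p
  have hCS : Real.cos (θ/2 - Real.pi/4) = (C + S) * (Real.sqrt 2 / 2) := by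
    rw [Real.cos_sub, Real.cos_pi_div_four, Real.sin_pi_div_four]
    ring
  rw [hCS]
  have hb : ‖((C:ℂ)*(p+q) + (S:ℂ)*(r+s))‖ ^ 2 ≤ (C*u + S*v)^2 := by
    have := norm_nonneg ((C:ℂ)*(p+q) + (S:ℂ)*(r+s))
    nlinarith
  have hexp : (C*u+S*v)^2 = 1 + (C^2-S^2)*(2*t) + (2*C*S)*(u*v) := by nlinarith
  have hsq : (1/Real.sqrt 2)^2 = 1/2 := by
    rw [div_pow, Real.sq_sqrt (by norm_num : (0:ℝ) ≤ 2)]; norm_num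
  have hs2' : Real.sqrt 2 * Real.sqrt 2 = 2 := Real.mul_self_sqrt (by norm_num)
  rw [habsp, mul_pow, hsq]
  nlinarith [hkey, hb]


noncomputable def Uopt (t0 : ℝ) : Matrix (Fin 2) (Fin 2) ℂ :=
  ![![((Real.cos t0 : ℝ) : ℂ), ((-Real.sin t0 : ℝ) : ℂ)],
    ![((Real.sin t0 : ℝ) : ℂ), ((Real.cos t0 : ℝ) : ℂ)]]

lemma Uopt_mem (t0 : ℝ) : Uopt t0 ∈ Matrix.unitaryGroup (Fin 2) ℂ := by
  rw [Matrix.mem_unitaryGroup_iff]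
  have h := Real.sin_sq_add_cos_sq t0
  ext i j
  simp only [Matrix.mul_apply, Fin.sum_univ_two, Matrix.star_apply]
  fin_cases i <;> fin_cases j <;>
    simp only [Uopt, Matrix.mul_apply, Fin.sum_univ_two, Matrix.star_apply, Matrix.one_apply,
      Fin.mk_zero, Fin.mk_one, Fin.isValue,
      Matrix.cons_val_zero, Matrix.cons_val_one, Matrix.head_cons,
      RCLike.star_def, Complex.conj_ofReal] <;>
    norm_num <;> norm_cast <;> nlinarith [h]

lemma wit_val (θ : ℝ) :
    1 / 2 * ‖(star (![1, 0] : Fin 2 → ℂ) ⬝ᵥ (Uopt (Real.pi/8 - θ/4) *ᵥ ![1, 0]))‖ ^ 2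
      + 1 / 2 * ‖
          (star (![((1 / Real.sqrt 2 : ℝ) : ℂ), ((1 / Real.sqrt 2 : ℝ) : ℂ)])
            ⬝ᵥ (Uopt (Real.pi/8 - θ/4) *ᵥ ![((Real.cos (θ / 2) : ℝ) : ℂ), ((Real.sin (θ / 2) : ℝ) : ℂ)]))‖ ^ 2
      = 1 / 2 + 1 / 2 * Real.cos (θ / 2 - Real.pi / 4) := by
  set t0 := Real.pi/8 - θ/4 with ht0
  set C := Real.cos (θ/2) with hCdef
  set S := Real.sin (θ/2) with hSdef
  have h := Real.sin_sq_add_cos_sq t0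
  have hs2 : Real.sqrt 2 * Real.sqrt 2 = 2 := Real.mul_self_sqrt (by norm_num)
  have hs2pos : (0:ℝ) < Real.sqrt 2 := Real.sqrt_pos.mpr (by norm_num)
  have d1 : star (![1, 0] : Fin 2 → ℂ) ⬝ᵥ (Uopt t0 *ᵥ ![1, 0]) = ((Real.cos t0 : ℝ) : ℂ) := by
    simp [Uopt, dotProduct, Matrix.mulVec, Fin.sum_univ_two]
  have hX : C * Real.cos t0 - S * Real.sin t0 + (C * Real.sin t0 + S * Real.cos t0)
      = Real.sqrt 2 * Real.cos t0 := by
    have hth : θ/2 = Real.pi/4 - 2*t0 := by rw [ht0]; ring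
    rw [hCdef, hSdef, hth, Real.cos_sub, Real.sin_sub, Real.cos_pi_div_four,
      Real.sin_pi_div_four, Real.cos_two_mul, Real.sin_two_mul]
    linear_combination (2 * Real.sqrt 2 * Real.cos t0) * h
  have d2 : star (![((1 / Real.sqrt 2 : ℝ) : ℂ), ((1 / Real.sqrt 2 : ℝ) : ℂ)])
      ⬝ᵥ (Uopt t0 *ᵥ ![((C : ℝ) : ℂ), ((S : ℝ) : ℂ)])
      = (((1 / Real.sqrt 2) * (Real.sqrt 2 * Real.cos t0) : ℝ) : ℂ) := by
    rw [← hX]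
    simp [Uopt, dotProduct, Matrix.mulVec, Fin.sum_univ_two, Complex.conj_ofReal]
    push_cast
    ring
  rw [d1, d2, Complex.norm_real, Complex.norm_real, Real.norm_eq_abs, Real.norm_eq_abs, sq_abs, sq_abs]
  have hcos : Real.cos (θ/2 - Real.pi/4) = 2 * Real.cos t0 ^ 2 - 1 := by
    have : θ/2 - Real.pi/4 = -(2*t0) := by rw [ht0]; ring
    rw [this, Real.cos_neg, Real.cos_two_mul]
  rw [hcos]
  have : (1 / Real.sqrt 2) * (Real.sqrt 2 * Real.cos t0) = Real.cos t0 := by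
    field_simp
  rw [this]
  ring

theorem stmt14 (θ : ℝ) (hθ0 : 0 ≤ θ) (hθπ : θ ≤ Real.pi) :
    sSup {x : ℝ | ∃ U ∈ Matrix.unitaryGroup (Fin 2) ℂ,
        x = 1 / 2 * ‖(star (![1, 0] : Fin 2 → ℂ) ⬝ᵥ (U *ᵥ ![1, 0]))‖ ^ 2
          + 1 / 2 * ‖
              (star (![((1 / Real.sqrt 2 : ℝ) : ℂ), ((1 / Real.sqrt 2 : ℝ) : ℂ)])
                ⬝ᵥ (U *ᵥ ![((Real.cos (θ / 2) : ℝ) : ℂ), ((Real.sin (θ / 2) : ℝ) : ℂ)]))‖ ^ 2}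
      = 1 / 2 + 1 / 2 * Real.cos (θ / 2 - Real.pi / 4) := by
  apply IsGreatest.csSup_eq
  constructor
  · exact ⟨Uopt (Real.pi/8 - θ/4), Uopt_mem _, (wit_val θ).symm⟩
  · rintro x ⟨U, hU, rfl⟩
    exact ubd θ hθ0 hθπ U hU
end

section
/- Let C(r,s,t,a,b) := ((r·a − (1−r)·b)² + 4r(1−r)·a·b·(st + √((1−s²)(1−t²)))²)^{1/2} for r ∈ (0,1), a,b > 0, s,t ∈ [0,1]. Then C(r,s,t,a,b) ≤ r·a + (1−r)·b, with equality if and only if s = t. -/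
/-!
Put `k = s t + √((1 - s²)(1 - t²))`. Since `(1 - s t)² - (1 - s²)(1 - t²) = (s - t)²`, we get
`0 ≤ k ≤ 1` with `k = 1` exactly when `s = t`. The radicand equals
`(r a + (1 - r) b)² - 4 r (1 - r) a b (1 - k²)`, so it is at most `(r a + (1 - r) b)²`, with
equality exactly when `k² = 1`.
-/

section

variable {s t : ℝ}

lemma one_sub_mul_sq_sub_one_sub_sq_mul_one_sub_sq (s t : ℝ) :
    (1 - s * t) ^ 2 - (1 - s ^ 2) * (1 - t ^ 2) = (s - t) ^ 2 := by
  ring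

lemma sqrt_one_sub_sq_mul_one_sub_sq_le (hs : s ^ 2 ≤ 1) (ht : t ^ 2 ≤ 1) :
    √((1 - s ^ 2) * (1 - t ^ 2)) ≤ 1 - s * t := by
  refine Real.sqrt_le_iff.2 ⟨by nlinarith [sq_nonneg (s - t)], sub_nonneg.1 ?_⟩
  rw [one_sub_mul_sq_sub_one_sub_sq_mul_one_sub_sq]
  positivity

lemma sqrt_one_sub_sq_mul_one_sub_sq_eq_iff (hs : s ^ 2 ≤ 1) (ht : t ^ 2 ≤ 1) :
    √((1 - s ^ 2) * (1 - t ^ 2)) = 1 - s * t ↔ s = t := by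
  have hst : 0 ≤ 1 - s * t :=
    (Real.sqrt_nonneg _).trans (sqrt_one_sub_sq_mul_one_sub_sq_le hs ht)
  rw [Real.sqrt_eq_iff_eq_sq (mul_nonneg (by linarith) (by linarith)) hst,
    eq_comm, ← sub_eq_zero, one_sub_mul_sq_sub_one_sub_sq_mul_one_sub_sq,
    sq_eq_zero_iff, sub_eq_zero]

end

section

variable {x y k : ℝ}

lemma sqrt_sub_sq_add_four_mul_mul_sq_le (hx : 0 ≤ x) (hy : 0 ≤ y) (hk : k ^ 2 ≤ 1) :
    √((x - y) ^ 2 + 4 * x * y * k ^ 2) ≤ x + y := by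
  rw [Real.sqrt_le_left (add_nonneg hx hy)]
  nlinarith [mul_nonneg (mul_nonneg hx hy) (sub_nonneg.2 hk)]

lemma sqrt_sub_sq_add_four_mul_mul_sq_eq_iff (hx : 0 < x) (hy : 0 < y) :
    √((x - y) ^ 2 + 4 * x * y * k ^ 2) = x + y ↔ k ^ 2 = 1 := by
  have hxy : 0 < 4 * x * y := by positivity
  rw [Real.sqrt_eq_iff_eq_sq (by positivity) (by positivity)]
  constructor
  · intro h
    exact mul_left_cancel₀ hxy.ne' (by linear_combination h)
  · intro h
    rw [h]
    ring

end

theorem stmt16 (r a b s t : ℝ) (hr : r ∈ Set.Ioo (0 : ℝ) 1) (ha : 0 < a) (hb : 0 < b)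
    (hs : s ∈ Set.Icc (0 : ℝ) 1) (ht : t ∈ Set.Icc (0 : ℝ) 1) :
    Real.sqrt ((r * a - (1 - r) * b) ^ 2
        + 4 * r * (1 - r) * a * b * (s * t + Real.sqrt ((1 - s ^ 2) * (1 - t ^ 2))) ^ 2)
      ≤ r * a + (1 - r) * b
    ∧ (Real.sqrt ((r * a - (1 - r) * b) ^ 2
        + 4 * r * (1 - r) * a * b * (s * t + Real.sqrt ((1 - s ^ 2) * (1 - t ^ 2))) ^ 2)
        = r * a + (1 - r) * b ↔ s = t) := by
  obtain ⟨hr0, hr1⟩ := hr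
  have hx : 0 < r * a := mul_pos hr0 ha
  have hy : 0 < (1 - r) * b := mul_pos (sub_pos.2 hr1) hb
  have hs2 : s ^ 2 ≤ 1 := pow_le_one₀ hs.1 hs.2
  have ht2 : t ^ 2 ≤ 1 := pow_le_one₀ ht.1 ht.2
  set k := s * t + √((1 - s ^ 2) * (1 - t ^ 2)) with hk
  have hk0 : 0 ≤ k := add_nonneg (mul_nonneg hs.1 ht.1) (Real.sqrt_nonneg _)
  have hk1 : k ≤ 1 := by linarith [sqrt_one_sub_sq_mul_one_sub_sq_le hs2 ht2]
  have hk_eq : k ^ 2 = 1 ↔ s = t := by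
    rw [pow_eq_one_iff_of_nonneg hk0 two_ne_zero, hk,
      ← sqrt_one_sub_sq_mul_one_sub_sq_eq_iff hs2 ht2]
    constructor <;> intro h <;> linarith
  rw [show 4 * r * (1 - r) * a * b = 4 * (r * a) * ((1 - r) * b) by ring]
  exact ⟨sqrt_sub_sq_add_four_mul_mul_sq_le hx.le hy.le (pow_le_one₀ hk0 hk1),
    (sqrt_sub_sq_add_four_mul_mul_sq_eq_iff hx hy).trans hk_eq⟩
end

section
/- For the maximum over 2×2 unitaries U of (1/2)|⟨0|U|0⟩|² + (1/2)|⟨x₀|U|1⟩|² where |x₀⟩ = (|0⟩+|1⟩)/√2, the value is (1/2)(1 + 1/√2), which is strictly less than 1. -/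
open Matrix Kronecker
open scoped ComplexOrder

private lemma sqrt2_pos : (0:ℝ) < Real.sqrt 2 := Real.sqrt_pos.mpr (by norm_num)

private lemma sqrt2_sq : Real.sqrt 2 ^ 2 = 2 := Real.sq_sqrt (by norm_num)

private lemma sqrt2_lt_two : Real.sqrt 2 < 2 := by
  nlinarith [sqrt2_sq, sqrt2_pos]

private lemma inv_sqrt2 : 1 / Real.sqrt 2 = Real.sqrt 2 / 2 := by
  rw [div_eq_div_iff sqrt2_pos.ne' (by norm_num : (2:ℝ) ≠ 0)]
  nlinarith [sqrt2_sq]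

private lemma key_ineq (A B s : ℝ) (hA : 0 ≤ A) (hB : 0 ≤ B) (hs : 0 ≤ s)
    (h1 : A ^ 2 + B ^ 2 = 1) (h2 : s ≤ A + B) :
    1 / 2 * A ^ 2 + 1 / 4 * s ^ 2 ≤ 1 / 2 * (1 + 1 / Real.sqrt 2) := by
  have key : A ^ 2 - B ^ 2 + 2 * A * B ≤ Real.sqrt 2 := by
    nlinarith [sq_nonneg (A ^ 2 - B ^ 2 - 2 * A * B), Real.sqrt_nonneg 2, sqrt2_sq,
      sq_nonneg (A ^ 2 - B ^ 2 + 2 * A * B)]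
  have hs2 : s ^ 2 ≤ (A + B) ^ 2 := by nlinarith
  rw [inv_sqrt2]
  nlinarith [key]

/-- entries of a unitary: row/column norms -/
private lemma row_norm (U : Matrix (Fin 2) (Fin 2) ℂ) (hU : U ∈ Matrix.unitaryGroup (Fin 2) ℂ) :
    ‖U 0 0‖ ^ 2 + ‖U 0 1‖ ^ 2 = 1 := by
  have h : U * star U = 1 := (Matrix.mem_unitaryGroup_iff).mp hU
  have h00 : (U * star U) 0 0 = (1 : Matrix (Fin 2) (Fin 2) ℂ) 0 0 := by rw [h]
  simp [Matrix.mul_apply, Fin.sum_univ_two, Matrix.one_apply, Matrix.star_apply] at h00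
  have := congrArg Complex.re h00
  simp [Complex.add_re, Complex.mul_re, Complex.conj_re, Complex.conj_im] at this
  simp [Complex.sq_norm, Complex.normSq_apply]
  linarith

private lemma col_norm (U : Matrix (Fin 2) (Fin 2) ℂ) (hU : U ∈ Matrix.unitaryGroup (Fin 2) ℂ) :
    ‖U 0 1‖ ^ 2 + ‖U 1 1‖ ^ 2 = 1 := by
  have h : star U * U = 1 := (Matrix.mem_unitaryGroup_iff').mp hU
  have h11 : (star U * U) 1 1 = (1 : Matrix (Fin 2) (Fin 2) ℂ) 1 1 := by rw [h]
  simp [Matrix.mul_apply, Fin.sum_univ_two, Matrix.one_apply, Matrix.star_apply] at h11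
  have := congrArg Complex.re h11
  simp [Complex.add_re, Complex.mul_re, Complex.conj_re, Complex.conj_im] at this
  simp [Complex.sq_norm, Complex.normSq_apply]
  linarith

theorem stmt18 :
    sSup {x : ℝ | ∃ U ∈ Matrix.unitaryGroup (Fin 2) ℂ,
        x = 1 / 2 * ‖star (![1, 0] : Fin 2 → ℂ) ⬝ᵥ (U *ᵥ ![1, 0])‖ ^ 2
          + 1 / 2 * ‖(star (![((1 / Real.sqrt 2 : ℝ) : ℂ), ((1 / Real.sqrt 2 : ℝ) : ℂ)])
                ⬝ᵥ (U *ᵥ ![0, 1]))‖ ^ 2}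
      = 1 / 2 * (1 + 1 / Real.sqrt 2)
    ∧ 1 / 2 * (1 + 1 / Real.sqrt 2) < 1 := by
  constructor
  · -- sSup part
    set a : ℝ := Real.sqrt ((2 + Real.sqrt 2) / 4) with ha_def
    set b : ℝ := Real.sqrt ((2 - Real.sqrt 2) / 4) with hb_def
    have ha0 : 0 ≤ a := Real.sqrt_nonneg _
    have hb0 : 0 ≤ b := Real.sqrt_nonneg _
    have ha2 : a ^ 2 = (2 + Real.sqrt 2) / 4 :=
      Real.sq_sqrt (by nlinarith [sqrt2_pos])
    have hb2 : b ^ 2 = (2 - Real.sqrt 2) / 4 :=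
      Real.sq_sqrt (by nlinarith [sqrt2_lt_two])
    have hab : a * b = Real.sqrt 2 / 4 := by
      rw [ha_def, hb_def, ← Real.sqrt_mul (by nlinarith [sqrt2_pos])]
      have : (2 + Real.sqrt 2) / 4 * ((2 - Real.sqrt 2) / 4) = 2 / 4 ^ 2 := by
        nlinarith [sqrt2_sq]
      rw [this, show (2:ℝ) / 4 ^ 2 = 2 / (4:ℝ)^2 by norm_num,
        Real.sqrt_div' 2 (by norm_num)]
      rw [show ((4:ℝ))^2 = 16 by norm_num, show (16:ℝ) = 4^2 by norm_num,
        Real.sqrt_sq (by norm_num : (0:ℝ) ≤ 4)]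
    apply le_antisymm
    · -- upper bound
      apply csSup_le
      · -- nonempty: the identity is unitary
        refine ⟨_, ⟨1, ?_, rfl⟩⟩
        exact Submonoid.one_mem _
      · rintro x ⟨U, hU, rfl⟩
        have hd1 : star (![1, 0] : Fin 2 → ℂ) ⬝ᵥ (U *ᵥ ![1, 0]) = U 0 0 := by
          simp [dotProduct, Matrix.mulVec, Fin.sum_univ_two]
        have hd2 : star (![((1 / Real.sqrt 2 : ℝ) : ℂ), ((1 / Real.sqrt 2 : ℝ) : ℂ)])
            ⬝ᵥ (U *ᵥ ![0, 1]) = ((1 / Real.sqrt 2 : ℝ) : ℂ) * (U 0 1 + U 1 1) := by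
          simp [dotProduct, Matrix.mulVec, Fin.sum_univ_two]
          ring
        rw [hd1, hd2, norm_mul, Complex.norm_real, Real.norm_eq_abs,
          abs_of_nonneg (by positivity : (0:ℝ) ≤ 1 / Real.sqrt 2)]
        set A := ‖U 0 0‖
        set B := ‖U 0 1‖
        set D := ‖U 1 1‖
        have hrow : A ^ 2 + B ^ 2 = 1 := row_norm U hU
        have hcol : B ^ 2 + D ^ 2 = 1 := col_norm U hU
        have hDA : D = A := by
          have h1 : D ^ 2 = A ^ 2 := by linarith
          have hD0 : (0:ℝ) ≤ D := norm_nonneg _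
          have hA0 : (0:ℝ) ≤ A := norm_nonneg _
          rw [← Real.sqrt_sq hD0, ← Real.sqrt_sq hA0, h1]
        have hs : ‖U 0 1 + U 1 1‖ ≤ A + B := by
          calc ‖U 0 1 + U 1 1‖ ≤ B + D := norm_add_le _ _
          _ = A + B := by rw [hDA]; ring
        have h12 : (1 / Real.sqrt 2) ^ 2 = 1 / 2 := by
          rw [div_pow, sqrt2_sq]; norm_num
        calc 1 / 2 * A ^ 2 + 1 / 2 * (1 / Real.sqrt 2 * ‖U 0 1 + U 1 1‖) ^ 2
            = 1 / 2 * A ^ 2 + 1 / 4 * ‖U 0 1 + U 1 1‖ ^ 2 := by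
              rw [mul_pow, h12]; ring
          _ ≤ 1 / 2 * (1 + 1 / Real.sqrt 2) :=
              key_ineq A B _ (norm_nonneg _) (norm_nonneg _)
                (norm_nonneg _) hrow hs
    · -- the value is attained
      apply le_csSup
      · -- bounded above
        refine ⟨1 / 2 * (1 + 1 / Real.sqrt 2), ?_⟩
        rintro x ⟨U, hU, rfl⟩
        have hd1 : star (![1, 0] : Fin 2 → ℂ) ⬝ᵥ (U *ᵥ ![1, 0]) = U 0 0 := by
          simp [dotProduct, Matrix.mulVec, Fin.sum_univ_two]
        have hd2 : star (![((1 / Real.sqrt 2 : ℝ) : ℂ), ((1 / Real.sqrt 2 : ℝ) : ℂ)])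
            ⬝ᵥ (U *ᵥ ![0, 1]) = ((1 / Real.sqrt 2 : ℝ) : ℂ) * (U 0 1 + U 1 1) := by
          simp [dotProduct, Matrix.mulVec, Fin.sum_univ_two]
          ring
        rw [hd1, hd2, norm_mul, Complex.norm_real, Real.norm_eq_abs,
          abs_of_nonneg (by positivity : (0:ℝ) ≤ 1 / Real.sqrt 2)]
        set A := ‖U 0 0‖
        set B := ‖U 0 1‖
        set D := ‖U 1 1‖
        have hrow : A ^ 2 + B ^ 2 = 1 := row_norm U hU
        have hcol : B ^ 2 + D ^ 2 = 1 := col_norm U hU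
        have hDA : D = A := by
          have h1 : D ^ 2 = A ^ 2 := by linarith
          have hD0 : (0:ℝ) ≤ D := norm_nonneg _
          have hA0 : (0:ℝ) ≤ A := norm_nonneg _
          rw [← Real.sqrt_sq hD0, ← Real.sqrt_sq hA0, h1]
        have hs : ‖U 0 1 + U 1 1‖ ≤ A + B := by
          calc ‖U 0 1 + U 1 1‖ ≤ B + D := norm_add_le _ _
          _ = A + B := by rw [hDA]; ring
        have h12 : (1 / Real.sqrt 2) ^ 2 = 1 / 2 := by
          rw [div_pow, sqrt2_sq]; norm_num
        calc 1 / 2 * A ^ 2 + 1 / 2 * (1 / Real.sqrt 2 * ‖U 0 1 + U 1 1‖) ^ 2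
            = 1 / 2 * A ^ 2 + 1 / 4 * ‖U 0 1 + U 1 1‖ ^ 2 := by
              rw [mul_pow, h12]; ring
          _ ≤ 1 / 2 * (1 + 1 / Real.sqrt 2) :=
              key_ineq A B _ (norm_nonneg _) (norm_nonneg _)
                (norm_nonneg _) hrow hs
      · -- membership: witness
        refine ⟨![![(a:ℂ), (b:ℂ)], ![(-b:ℝ), (a:ℂ)]], ?_, ?_⟩
        · refine Matrix.mem_unitaryGroup_iff.mpr ?_
          change Matrix.of ![![(a:ℂ), (b:ℂ)], ![((-b:ℝ):ℂ), (a:ℂ)]] *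
            star (Matrix.of ![![(a:ℂ), (b:ℂ)], ![((-b:ℝ):ℂ), (a:ℂ)]]) = 1
          have hab1 : ((a:ℂ)) * a + (b:ℂ) * b = 1 := by
            have : a ^ 2 + b ^ 2 = 1 := by rw [ha2, hb2]; ring
            have h2 : ((a ^ 2 + b ^ 2 : ℝ) : ℂ) = 1 := by rw [this]; norm_num
            push_cast at h2
            linear_combination h2
          ext i j
          fin_cases i <;> fin_cases j <;>
            simp [Matrix.mul_apply, Fin.sum_univ_two, Matrix.star_apply, Matrix.one_apply,
              Complex.conj_ofReal] <;>
            push_cast <;> (first | linear_combination hab1 | linear_combination 2*hab1 | linear_combination -hab1 | ring)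
        · have hd1 : star (![1, 0] : Fin 2 → ℂ) ⬝ᵥ
              ((![![(a:ℂ), (b:ℂ)], ![(-b:ℝ), (a:ℂ)]] : Matrix (Fin 2) (Fin 2) ℂ) *ᵥ ![1, 0])
              = (a : ℂ) := by
            simp [dotProduct, Matrix.mulVec, Fin.sum_univ_two]
          have hd2 : star (![((1 / Real.sqrt 2 : ℝ) : ℂ), ((1 / Real.sqrt 2 : ℝ) : ℂ)])
              ⬝ᵥ ((![![(a:ℂ), (b:ℂ)], ![(-b:ℝ), (a:ℂ)]] : Matrix (Fin 2) (Fin 2) ℂ) *ᵥ ![0, 1])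
              = (((1 / Real.sqrt 2) * (b + a) : ℝ) : ℂ) := by
            simp [dotProduct, Matrix.mulVec, Fin.sum_univ_two]
            push_cast
            ring
          rw [hd1, hd2, Complex.norm_real, Complex.norm_real, Real.norm_eq_abs, Real.norm_eq_abs,
            abs_of_nonneg ha0,
            abs_of_nonneg (by positivity : (0:ℝ) ≤ 1 / Real.sqrt 2 * (b + a))]
          rw [inv_sqrt2]
          nlinarith [ha2, hb2, hab, sqrt2_sq]
  · -- strict inequality
    have : 1 / Real.sqrt 2 < 1 := by
      rw [div_lt_one sqrt2_pos]
      nlinarith [sqrt2_sq, sqrt2_pos]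
    linarith
end

section
/- For any qubit effect E (0 ≤ E ≤ I on ℂ²) and any qubit density operator ρ, max over 2×2 unitaries U of tr[E·UρU†] = (1/2)(tr E + ΔE·Δρ), where ΔX is the difference between maximal and minimal eigenvalues of X. -/
open Matrix Kronecker
open scoped ComplexOrder

lemma trace_diag_mul (e : Fin 2 → ℝ) (τ : Matrix (Fin 2) (Fin 2) ℂ) :
    ((Matrix.diagonal (Complex.ofReal ∘ e) * τ).trace).re
      = e 0 * (τ 0 0).re + e 1 * (τ 1 1).re := by
  simp [Matrix.trace_fin_two, Matrix.mul_apply, Fin.sum_univ_two, Matrix.diagonal_apply]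

lemma unit_cancel {V : Matrix (Fin 2) (Fin 2) ℂ} (hV : V ∈ Matrix.unitaryGroup (Fin 2) ℂ)
    (X : Matrix (Fin 2) (Fin 2) ℂ) : Vᴴ * (V * X) = X := by
  rw [← Matrix.mul_assoc, ← Matrix.star_eq_conjTranspose, Unitary.star_mul_self_of_mem hV,
    Matrix.one_mul]

lemma swap_unitary : !![(0:ℂ),1;1,0] ∈ Matrix.unitaryGroup (Fin 2) ℂ := by
  rw [Matrix.mem_unitaryGroup_iff]
  ext i j
  fin_cases i <;> fin_cases j <;>
    simp [Matrix.mul_apply, Fin.sum_univ_two, Matrix.star_eq_conjTranspose,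
      Matrix.conjTranspose_apply]

lemma swap_conj (r : Fin 2 → ℝ) :
    !![(0:ℂ),1;1,0] * Matrix.diagonal (Complex.ofReal ∘ r) * !![(0:ℂ),1;1,0]ᴴ
      = Matrix.diagonal (Complex.ofReal ∘ r ∘ Equiv.swap 0 1) := by
  ext i j
  fin_cases i <;> fin_cases j <;>
    simp [Matrix.mul_apply, Fin.sum_univ_two, Matrix.diagonal_apply,
      Matrix.conjTranspose_apply, Equiv.swap_apply_def, Matrix.vecMul, dotProduct]

theorem stmt19 (E ρ : Matrix (Fin 2) (Fin 2) ℂ)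
    (hE : E.PosSemidef) (hE1 : ((1 : Matrix (Fin 2) (Fin 2) ℂ) - E).PosSemidef)
    (hρ : ρ.PosSemidef) (htr : ρ.trace = 1) :
    sSup {x : ℝ | ∃ U ∈ Matrix.unitaryGroup (Fin 2) ℂ,
        x = ((E * (U * ρ * Uᴴ)).trace).re}
      = 1 / 2 * (E.trace.re + gap E hE.1 * gap ρ hρ.1) := by
  set e : Fin 2 → ℝ := hE.1.eigenvalues with he
  set r : Fin 2 → ℝ := hρ.1.eigenvalues with hr
  set W : Matrix (Fin 2) (Fin 2) ℂ := (hE.1.eigenvectorUnitary : Matrix (Fin 2) (Fin 2) ℂ) with hW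
  set P : Matrix (Fin 2) (Fin 2) ℂ := (hρ.1.eigenvectorUnitary : Matrix (Fin 2) (Fin 2) ℂ) with hP
  have hWu : W ∈ Matrix.unitaryGroup (Fin 2) ℂ := (hE.1.eigenvectorUnitary).2
  have hPu : P ∈ Matrix.unitaryGroup (Fin 2) ℂ := (hρ.1.eigenvectorUnitary).2
  set De : Matrix (Fin 2) (Fin 2) ℂ := Matrix.diagonal (Complex.ofReal ∘ e) with hDe
  set Dρ : Matrix (Fin 2) (Fin 2) ℂ := Matrix.diagonal (Complex.ofReal ∘ r) with hDρ
  have hEspec : E = W * De * Wᴴ := by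
    simpa [Matrix.star_eq_conjTranspose] using hE.1.spectral_theorem
  have hρspec : ρ = P * Dρ * Pᴴ := by
    simpa [Matrix.star_eq_conjTranspose] using hρ.1.spectral_theorem
  have htrE : E.trace.re = e 0 + e 1 := by
    rw [hEspec, Matrix.trace_mul_cycle, ← Matrix.star_eq_conjTranspose,
      Unitary.star_mul_self_of_mem hWu, Matrix.one_mul]
    simp [hDe, Matrix.trace_diagonal, Fin.sum_univ_two]
  have htrρ : r 0 + r 1 = 1 := by
    have h2 : ρ.trace.re = r 0 + r 1 := by
      rw [hρspec, Matrix.trace_mul_cycle, ← Matrix.star_eq_conjTranspose,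
        Unitary.star_mul_self_of_mem hPu, Matrix.one_mul]
      simp [hDρ, Matrix.trace_diagonal, Fin.sum_univ_two]
    rw [htr] at h2; simpa using h2.symm
  have hr0 : 0 ≤ r 0 := hρ.eigenvalues_nonneg 0
  have hr1 : 0 ≤ r 1 := hρ.eigenvalues_nonneg 1
  have he0 : 0 ≤ e 0 := hE.eigenvalues_nonneg 0
  have he1 : 0 ≤ e 1 := hE.eigenvalues_nonneg 1
  set v : ℝ := max (e 0) (e 1) * max (r 0) (r 1) + min (e 0) (e 1) * min (r 0) (r 1) with hv
  have hgoal : 1 / 2 * (E.trace.re + gap E hE.1 * gap ρ hρ.1) = v := by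
    rw [htrE]
    show 1 / 2 * ((e 0 + e 1) + (max (e 0) (e 1) - min (e 0) (e 1)) *
      (max (r 0) (r 1) - min (r 0) (r 1))) = v
    rcases le_total (e 0) (e 1) with h1 | h1 <;> rcases le_total (r 0) (r 1) with h2 | h2
    · rw [hv, max_eq_right h1, max_eq_right h2, min_eq_left h1, min_eq_left h2]
      linear_combination (-(e 0 + e 1)/2) * htrρ
    · rw [hv, max_eq_right h1, max_eq_left h2, min_eq_left h1, min_eq_right h2]
      linear_combination (-(e 0 + e 1)/2) * htrρ
    · rw [hv, max_eq_left h1, max_eq_right h2, min_eq_right h1, min_eq_left h2]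
      linear_combination (-(e 0 + e 1)/2) * htrρ
    · rw [hv, max_eq_left h1, max_eq_left h2, min_eq_right h1, min_eq_right h2]
      linear_combination (-(e 0 + e 1)/2) * htrρ
  rw [hgoal]
  have hkey : ∀ U, (E * (U * ρ * Uᴴ)).trace = (De * ((Wᴴ * U) * ρ * (Wᴴ * U)ᴴ)).trace := by
    intro U
    rw [hEspec]
    have h1 : (W * De * Wᴴ) * (U * ρ * Uᴴ) = W * (De * (Wᴴ * (U * (ρ * Uᴴ)))) := by
      simp only [Matrix.mul_assoc]
    rw [h1, Matrix.trace_mul_comm]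
    congr 1
    simp only [Matrix.conjTranspose_mul, Matrix.conjTranspose_conjTranspose, Matrix.mul_assoc]
  have hdiag_re : ∀ (A : Matrix (Fin 2) (Fin 2) ℂ), A.PosSemidef → ∀ i, 0 ≤ (A i i).re := by
    intro A hA i
    have := hA.re_dotProduct_nonneg (Pi.single i 1)
    simpa [dotProduct, Matrix.mulVec, Fin.sum_univ_two, Pi.single_apply] using this
  apply IsGreatest.csSup_eq
  constructor
  · -- membership
    have mem1 : ∃ U ∈ Matrix.unitaryGroup (Fin 2) ℂ,
        e 0 * r 0 + e 1 * r 1 = ((E * (U * ρ * Uᴴ)).trace).re := by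
      refine ⟨W * Pᴴ, ?_, ?_⟩
      · exact mul_mem hWu (by rw [← Matrix.star_eq_conjTranspose]; exact Unitary.star_mem hPu)
      · rw [hkey, unit_cancel hWu]
        have hτeq : Pᴴ * ρ * Pᴴᴴ = Dρ := by
          rw [Matrix.conjTranspose_conjTranspose, hρspec]
          simp only [Matrix.mul_assoc]
          rw [unit_cancel hPu, ← Matrix.star_eq_conjTranspose,
            Unitary.star_mul_self_of_mem hPu, Matrix.mul_one]
        rw [hτeq, hDe, hDρ, trace_diag_mul]
        simp [Matrix.diagonal_apply_eq]
    have mem2 : ∃ U ∈ Matrix.unitaryGroup (Fin 2) ℂ,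
        e 0 * r 1 + e 1 * r 0 = ((E * (U * ρ * Uᴴ)).trace).re := by
      refine ⟨W * (!![(0:ℂ),1;1,0] * Pᴴ), ?_, ?_⟩
      · exact mul_mem hWu (mul_mem swap_unitary
          (by rw [← Matrix.star_eq_conjTranspose]; exact Unitary.star_mem hPu))
      · rw [hkey, unit_cancel hWu]
        have hτeq : (!![(0:ℂ),1;1,0] * Pᴴ) * ρ * (!![(0:ℂ),1;1,0] * Pᴴ)ᴴ
            = Matrix.diagonal (Complex.ofReal ∘ r ∘ Equiv.swap 0 1) := by
          rw [← swap_conj r, hρspec]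
          simp only [Matrix.conjTranspose_mul, Matrix.conjTranspose_conjTranspose,
            Matrix.mul_assoc]
          simp only [unit_cancel hPu, hDρ]
        rw [hτeq, hDe, trace_diag_mul]
        simp [Matrix.diagonal_apply_eq, Equiv.swap_apply_def]
    rcases le_total (e 0) (e 1) with h1 | h1 <;> rcases le_total (r 0) (r 1) with h2 | h2
    · obtain ⟨U, hU, hx⟩ := mem1
      refine ⟨U, hU, ?_⟩
      rw [hv, max_eq_right h1, max_eq_right h2, min_eq_left h1, min_eq_left h2]
      linarith
    · obtain ⟨U, hU, hx⟩ := mem2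
      refine ⟨U, hU, ?_⟩
      rw [hv, max_eq_right h1, max_eq_left h2, min_eq_left h1, min_eq_right h2]
      linarith
    · obtain ⟨U, hU, hx⟩ := mem2
      refine ⟨U, hU, ?_⟩
      rw [hv, max_eq_left h1, max_eq_right h2, min_eq_right h1, min_eq_left h2]
      linarith
    · obtain ⟨U, hU, hx⟩ := mem1
      refine ⟨U, hU, ?_⟩
      rw [hv, max_eq_left h1, max_eq_left h2, min_eq_right h1, min_eq_right h2]
      linarith
  · -- upper bound
    rintro x ⟨U, hU, rfl⟩
    set N : Matrix (Fin 2) (Fin 2) ℂ := Wᴴ * U with hN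
    have hNu : N ∈ Matrix.unitaryGroup (Fin 2) ℂ :=
      mul_mem (by rw [← Matrix.star_eq_conjTranspose]; exact Unitary.star_mem hWu) hU
    set τ : Matrix (Fin 2) (Fin 2) ℂ := N * ρ * Nᴴ with hτ
    have hτpsd : τ.PosSemidef := hρ.mul_mul_conjTranspose_same N
    have hτtr : τ.trace = 1 := by
      rw [hτ, Matrix.trace_mul_cycle, ← Matrix.star_eq_conjTranspose,
        Unitary.star_mul_self_of_mem hNu, Matrix.one_mul, htr]
    have hτ00 : 0 ≤ (τ 0 0).re := hdiag_re τ hτpsd 0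
    have hτ11 : 0 ≤ (τ 1 1).re := hdiag_re τ hτpsd 1
    have hτsum : (τ 0 0).re + (τ 1 1).re = 1 := by
      have := congrArg Complex.re hτtr
      simpa [Matrix.trace_fin_two] using this
    have hub : ∀ i, (τ i i).re ≤ max (r 0) (r 1) := by
      have hDpsd : (Matrix.diagonal (fun i => ((max (r 0) (r 1) - r i : ℝ) : ℂ))).PosSemidef := by
        rw [Matrix.posSemidef_diagonal_iff]
        intro i
        rw [Complex.zero_le_real, sub_nonneg]
        fin_cases i
        · exact le_max_left _ _
        · exact le_max_right _ _
      have hσpsd : (((max (r 0) (r 1) : ℝ) : ℂ) • (1 : Matrix (Fin 2) (Fin 2) ℂ) - ρ).PosSemidef := by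
        have heq : ((max (r 0) (r 1) : ℝ) : ℂ) • (1 : Matrix (Fin 2) (Fin 2) ℂ) - ρ
            = P * (Matrix.diagonal (fun i => ((max (r 0) (r 1) - r i : ℝ) : ℂ))) * Pᴴ := by
          rw [hρspec]
          have h1 : P * (((max (r 0) (r 1) : ℝ) : ℂ) • (1 : Matrix (Fin 2) (Fin 2) ℂ)) * Pᴴ
              = ((max (r 0) (r 1) : ℝ) : ℂ) • (1 : Matrix (Fin 2) (Fin 2) ℂ) := by
            rw [Matrix.mul_smul, Matrix.mul_one, Matrix.smul_mul, ← Matrix.star_eq_conjTranspose,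
              Unitary.mul_star_self_of_mem hPu]
          rw [← h1, ← Matrix.sub_mul, ← Matrix.mul_sub]
          congr 2
          ext i j
          rcases eq_or_ne i j with rfl | hij
          · simp [Matrix.diagonal_apply_eq, hDρ, Matrix.one_apply_eq, Matrix.smul_apply,
              Complex.ofReal_sub, smul_eq_mul, mul_one]
          · simp [Matrix.diagonal_apply_ne _ hij, hDρ, Matrix.one_apply_ne hij,
              Matrix.smul_apply]
        rw [heq]
        exact hDpsd.mul_mul_conjTranspose_same P
      have hτub : (((max (r 0) (r 1) : ℝ) : ℂ) • (1 : Matrix (Fin 2) (Fin 2) ℂ) - τ).PosSemidef := by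
        have heq : ((max (r 0) (r 1) : ℝ) : ℂ) • (1 : Matrix (Fin 2) (Fin 2) ℂ) - τ
            = N * (((max (r 0) (r 1) : ℝ) : ℂ) • (1 : Matrix (Fin 2) (Fin 2) ℂ) - ρ) * Nᴴ := by
          rw [Matrix.mul_sub, Matrix.sub_mul, hτ]
          congr 2
          rw [Matrix.mul_smul, Matrix.mul_one, Matrix.smul_mul, ← Matrix.star_eq_conjTranspose,
            Unitary.mul_star_self_of_mem hNu]
        rw [heq]
        exact hσpsd.mul_mul_conjTranspose_same N
      intro i
      have h := hdiag_re _ hτub i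
      simp only [Matrix.sub_apply, Matrix.smul_apply, Matrix.one_apply_eq, smul_eq_mul,
        mul_one, Complex.sub_re, Complex.ofReal_re] at h
      linarith
    have hval : ((E * (U * ρ * Uᴴ)).trace).re = e 0 * (τ 0 0).re + e 1 * (τ 1 1).re := by
      rw [hkey U, ← hN, ← hτ, hDe, trace_diag_mul]
    rw [hval]
    rcases le_total (e 0) (e 1) with hc | hc <;> rcases le_total (r 0) (r 1) with hd | hd
    · rw [hv, max_eq_right hc, max_eq_right hd, min_eq_left hc, min_eq_left hd]
      have := mul_le_mul_of_nonneg_left ((hub 1).trans_eq (max_eq_right hd))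
        (sub_nonneg.mpr hc)
      nlinarith
    · rw [hv, max_eq_right hc, max_eq_left hd, min_eq_left hc, min_eq_right hd]
      have := mul_le_mul_of_nonneg_left ((hub 1).trans_eq (max_eq_left hd))
        (sub_nonneg.mpr hc)
      nlinarith
    · rw [hv, max_eq_left hc, max_eq_right hd, min_eq_right hc, min_eq_left hd]
      have := mul_le_mul_of_nonneg_left ((hub 0).trans_eq (max_eq_right hd))
        (sub_nonneg.mpr hc)
      nlinarith
    · rw [hv, max_eq_left hc, max_eq_left hd, min_eq_right hc, min_eq_right hd]
      have := mul_le_mul_of_nonneg_left ((hub 0).trans_eq (max_eq_left hd))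
        (sub_nonneg.mpr hc)
      nlinarith
end
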